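/- arXiv:1411.6879 — 8 statements merged into one kernel-verified Lean document; each statement's English description precedes it below -/
import Mathlib

section
/- Under the assumptions $\Pro(g(i)=j)=1/N$ and $\Pro(g(i_1)=j_1,g(i_2)=j_2)\le C_G/N^2$ for distinct pairs, with $X_m$ counting intersections of the graph of $g$ with the positions of the $m$ largest entries (with respect to a fixed ordering $h$), one has for all $1 \le m \le nN$: $\Pro(X_m \ge 1) \ge \min\{\tfrac{m}{2N}, \tfrac{1}{2C_G}\} \cdot \Pro(X_{\ell N} \ge 1)$, and for all $k,m$ with $2kN \le m \le nN$: $\Pro(X_m \ge k) \ge \frac{1}{2+4C_G}\Pro(X_{\ell N} \ge k)$. -/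
/-!
`X_m` counts the events `g (h j).1 = (h j).2`, `j < m`, each of probability `1/N` and pairwise of
probability at most `C/N²`, so `𝔼 X_m = m/N` and `𝔼 X_m² ≤ m/N + C m (m-1)/N²`.

For `P(X_m ≥ 1)` use `1_{X ≥ 1} ≥ (3X - X²)/2` on `X_{m'}`, `m' = min m (⌊N/C⌋ + 1)`: then
`C (m' - 1) ≤ N`, so the second moment costs at most half the mean, giving `P ≥ m'/(2N)`.
For `P(X_m ≥ k)` use Paley–Zygmund: `𝔼[X; X ≥ k] ≥ 𝔼 X - k ≥ 𝔼 X / 2` once `m ≥ 2kN`.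
Both bounds in fact hold with `1` in place of `P(X_{ℓN} ≥ k)`.
-/

open Finset
open scoped BigOperators

section UniformAverage

variable {α : Type*}

lemma card_filter_div_card_eq_expect (G : Finset α) (p : α → Prop) [DecidablePred p] :
    (#(G.filter p) : ℝ) / #G = 𝔼 g ∈ G, if p g then (1 : ℝ) else 0 := by
  rw [expect_eq_sum_div_card, sum_boole]

lemma card_filter_div_card_le_one (G : Finset α) (p : α → Prop) [DecidablePred p] :
    (#(G.filter p) : ℝ) / #G ≤ 1 :=
  div_le_one_of_le₀ (by exact_mod_cast card_filter_le G p) (Nat.cast_nonneg _)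

section CountingEvents

variable {ι : Type*} (G : Finset α) (s : Finset ι) (E : ι → α → Prop) [∀ i, DecidablePred (E i)]

lemma expect_card_filter :
    𝔼 g ∈ G, (#(s.filter (E · g)) : ℝ) = ∑ i ∈ s, (#(G.filter (E i)) : ℝ) / #G := by
  simp_rw [card_filter_div_card_eq_expect, natCast_card_filter]
  exact expect_sum_comm _ _ _

lemma expect_card_filter_sq_le {p q : ℝ}
    (hp : ∀ i ∈ s, (#(G.filter (E i)) : ℝ) / #G = p)
    (hq : ∀ i ∈ s, ∀ j ∈ s, i ≠ j → (#(G.filter fun g => E i g ∧ E j g) : ℝ) / #G ≤ q) :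
    𝔼 g ∈ G, (#(s.filter (E · g)) : ℝ) ^ 2 ≤ #s * p + #s * (#s - 1) * q := by
  classical
  have hsq : ∀ g, (#(s.filter (E · g)) : ℝ) ^ 2
      = ∑ i ∈ s, ∑ j ∈ s, if E i g ∧ E j g then (1 : ℝ) else 0 := by
    intro g
    simp_rw [sq, natCast_card_filter, sum_mul_sum, ite_zero_mul_ite_zero, mul_one]
  have hrow : ∀ i ∈ s, ∑ j ∈ s, (#(G.filter fun g => E i g ∧ E j g) : ℝ) / #G
      ≤ p + (#s - 1) * q := by
    intro i hi
    rw [← add_sum_erase _ _ hi, ← cast_card_erase_of_mem hi, ← hp i hi]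
    simp only [and_self]
    gcongr
    calc ∑ j ∈ s.erase i, (#(G.filter fun g => E i g ∧ E j g) : ℝ) / #G
        ≤ ∑ _j ∈ s.erase i, q :=
          sum_le_sum fun j hj => hq i hi j (mem_of_mem_erase hj) (ne_of_mem_erase hj).symm
      _ = #(s.erase i) * q := by rw [sum_const, nsmul_eq_mul]
  calc 𝔼 g ∈ G, (#(s.filter (E · g)) : ℝ) ^ 2
      = ∑ i ∈ s, ∑ j ∈ s, (#(G.filter fun g => E i g ∧ E j g) : ℝ) / #G := by
        simp_rw [hsq, card_filter_div_card_eq_expect]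
        rw [expect_sum_comm]
        exact sum_congr rfl fun i _ => expect_sum_comm _ _ _
    _ ≤ ∑ _i ∈ s, (p + (#s - 1) * q) := sum_le_sum hrow
    _ = #s * p + #s * (#s - 1) * q := by rw [sum_const, nsmul_eq_mul]; ring

end CountingEvents

lemma three_mul_sub_sq_div_two_le_ite (x : ℕ) :
    (3 * (x : ℝ) - x ^ 2) / 2 ≤ if 1 ≤ x then 1 else 0 := by
  rcases Nat.lt_or_ge x 1 with hx | hx
  · simp [Nat.lt_one_iff.mp hx]
  · have : (0 : ℝ) ≤ (x - 1) * (x - 2) := by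
      rcases hx.eq_or_lt with rfl | hx2
      · norm_num
      · have : (2 : ℝ) ≤ x := by exact_mod_cast hx2
        nlinarith
    rw [if_pos hx]
    nlinarith

section Moments

variable (G : Finset α) (X : α → ℕ)

lemma moments_le_card_filter_one_le_div_card :
    (3 * 𝔼 g ∈ G, (X g : ℝ) - 𝔼 g ∈ G, (X g : ℝ) ^ 2) / 2
      ≤ (#(G.filter (1 ≤ X ·)) : ℝ) / #G := by
  rw [card_filter_div_card_eq_expect, mul_expect, ← expect_sub_distrib, expect_div]
  exact expect_le_expect fun g _ => three_mul_sub_sq_div_two_le_ite (X g)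

lemma paley_zygmund (hG : G.Nonempty) (k : ℕ) (hk : (k : ℝ) ≤ 𝔼 g ∈ G, (X g : ℝ)) :
    (𝔼 g ∈ G, (X g : ℝ) - k) ^ 2
      ≤ (#(G.filter (k ≤ X ·)) : ℝ) / #G * 𝔼 g ∈ G, (X g : ℝ) ^ 2 := by
  have htail : 𝔼 g ∈ G, (X g : ℝ) - k ≤ 𝔼 g ∈ G, (if k ≤ X g then 1 else 0) * (X g : ℝ) := by
    rw [sub_le_iff_le_add, ← expect_const hG (k : ℝ), ← expect_add_distrib]
    refine expect_le_expect fun g _ => ?_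
    split_ifs with h
    · linarith [Nat.cast_nonneg (α := ℝ) k]
    · rw [zero_mul, zero_add]
      exact_mod_cast (not_le.mp h).le
  have hind : ∀ g, (if k ≤ X g then (1 : ℝ) else 0) ^ 2 = if k ≤ X g then 1 else 0 := by
    intro g; split_ifs <;> norm_num
  calc (𝔼 g ∈ G, (X g : ℝ) - k) ^ 2
      ≤ (𝔼 g ∈ G, (if k ≤ X g then 1 else 0) * (X g : ℝ)) ^ 2 :=
        pow_le_pow_left₀ (sub_nonneg.2 hk) htail 2
    _ ≤ (𝔼 g ∈ G, (if k ≤ X g then (1 : ℝ) else 0) ^ 2) * 𝔼 g ∈ G, (X g : ℝ) ^ 2 :=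
        expect_mul_sq_le_sq_mul_sq _ _ _
    _ = (#(G.filter (k ≤ X ·)) : ℝ) / #G * 𝔼 g ∈ G, (X g : ℝ) ^ 2 := by
        simp_rw [hind, card_filter_div_card_eq_expect]

end Moments

end UniformAverage

lemma Fin.card_filter_val_lt_of_le {K m : ℕ} (hm : m ≤ K) :
    #(univ.filter fun j : Fin K => j.val < m) = m := by
  rw [Fin.card_filter_val_lt, min_eq_right hm]

section HitCount

variable {n N : ℕ} (h : Fin (n * N) ≃ Fin n × Fin N)

def hitCount (m : ℕ) (g : Fin n → Fin N) : ℕ :=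
  #((univ.filter fun j : Fin (n * N) => j.val < m).filter fun j => g (h j).1 = (h j).2)

lemma hitCount_mono {m m' : ℕ} (hmm' : m ≤ m') (g : Fin n → Fin N) :
    hitCount h m g ≤ hitCount h m' g :=
  card_le_card fun j hj => by simp only [mem_filter, mem_univ, true_and] at hj ⊢; omega

variable {G : Finset (Fin n → Fin N)} {C : ℝ} {m : ℕ}

lemma card_filter_one_le_hitCount_mono {m' : ℕ} (hmm' : m ≤ m') :
    (#(G.filter (1 ≤ hitCount h m ·)) : ℝ) / #G ≤ #(G.filter (1 ≤ hitCount h m' ·)) / #G := by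
  refine div_le_div_of_nonneg_right ?_ (Nat.cast_nonneg _)
  exact_mod_cast card_le_card <| monotone_filter_right G
    fun g _ (hg : 1 ≤ hitCount h m g) => hg.trans (hitCount_mono h hmm' g)

lemma expect_hitCount
    (h1 : ∀ i j, (#(G.filter fun g => g i = j) : ℝ) / #G = 1 / N) (hm : m ≤ n * N) :
    𝔼 g ∈ G, (hitCount h m g : ℝ) = m / N := by
  simp only [hitCount]
  rw [expect_card_filter]
  simp only [h1, sum_const, Fin.card_filter_val_lt_of_le hm, nsmul_eq_mul]
  ring

lemma expect_hitCount_sq_le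
    (h1 : ∀ i j, (#(G.filter fun g => g i = j) : ℝ) / #G = 1 / N)
    (h2 : ∀ p q : Fin n × Fin N, p ≠ q →
      (#(G.filter fun g => g p.1 = p.2 ∧ g q.1 = q.2) : ℝ) / #G ≤ C / (N : ℝ) ^ 2)
    (hm : m ≤ n * N) :
    𝔼 g ∈ G, (hitCount h m g : ℝ) ^ 2 ≤ m / N + m * (m - 1) * (C / N ^ 2) := by
  have := expect_card_filter_sq_le G (univ.filter fun j : Fin (n * N) => j.val < m)
    (fun j g => g (h j).1 = (h j).2) (fun _ _ => h1 _ _) fun i _ j _ hij =>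
      h2 _ _ (h.injective.ne hij)
  rwa [Fin.card_filter_val_lt_of_le hm, mul_one_div] at this

lemma div_two_mul_le_card_filter_one_le_hitCount (hN : 0 < N)
    (h1 : ∀ i j, (#(G.filter fun g => g i = j) : ℝ) / #G = 1 / N)
    (h2 : ∀ p q : Fin n × Fin N, p ≠ q →
      (#(G.filter fun g => g p.1 = p.2 ∧ g q.1 = q.2) : ℝ) / #G ≤ C / (N : ℝ) ^ 2)
    (hm : m ≤ n * N) (hCm : C * (m - 1) ≤ N) :
    (m : ℝ) / (2 * N) ≤ (#(G.filter (1 ≤ hitCount h m ·)) : ℝ) / #G := by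
  have hNr : (0 : ℝ) < N := by exact_mod_cast hN
  have hpair : (m : ℝ) * (m - 1) * (C / N ^ 2) ≤ m / N := by
    rw [mul_div_assoc', div_le_div_iff₀ (by positivity) hNr, sq]
    nlinarith [mul_le_mul_of_nonneg_left hCm (by positivity : (0 : ℝ) ≤ m * N)]
  calc (m : ℝ) / (2 * N) ≤ (3 * (m / N) - (m / N + m * (m - 1) * (C / N ^ 2))) / 2 := by
        rw [show (m : ℝ) / (2 * N) = (3 * (m / N) - (m / N + m / N)) / 2 by ring]
        linarith
    _ ≤ (3 * 𝔼 g ∈ G, (hitCount h m g : ℝ) - 𝔼 g ∈ G, (hitCount h m g : ℝ) ^ 2) / 2 := by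
        rw [expect_hitCount h h1 hm]
        linarith [expect_hitCount_sq_le h h1 h2 hm]
    _ ≤ _ := moments_le_card_filter_one_le_div_card G _

lemma min_le_card_filter_one_le_hitCount (hN : 0 < N) (hC : 0 < C)
    (h1 : ∀ i j, (#(G.filter fun g => g i = j) : ℝ) / #G = 1 / N)
    (h2 : ∀ p q : Fin n × Fin N, p ≠ q →
      (#(G.filter fun g => g p.1 = p.2 ∧ g q.1 = q.2) : ℝ) / #G ≤ C / (N : ℝ) ^ 2)
    (hm : m ≤ n * N) :
    min ((m : ℝ) / (2 * N)) (1 / (2 * C)) ≤ (#(G.filter (1 ≤ hitCount h m ·)) : ℝ) / #G := by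
  have hNr : (0 : ℝ) < N := by exact_mod_cast hN
  set m' := min m (⌊(N : ℝ) / C⌋₊ + 1) with hm'
  have hm'm : m' ≤ m := min_le_left _ _
  have hCm' : C * (m' - 1) ≤ N := by
    have : (m' : ℝ) - 1 ≤ (N : ℝ) / C := by
      have : (m' : ℝ) ≤ ⌊(N : ℝ) / C⌋₊ + 1 := by exact_mod_cast min_le_right _ _
      linarith [Nat.floor_le (div_nonneg hNr.le hC.le)]
    calc C * (m' - 1) ≤ C * (N / C) := mul_le_mul_of_nonneg_left this hC.le
      _ = N := mul_div_cancel₀ _ hC.ne'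
  have hmin : min ((m : ℝ) / (2 * N)) (1 / (2 * C)) ≤ m' / (2 * N) := by
    rcases min_choice m (⌊(N : ℝ) / C⌋₊ + 1) with h' | h'
    · rw [hm', h']
      exact min_le_left _ _
    · refine (min_le_right _ _).trans ?_
      rw [hm', h', div_le_div_iff₀ (by positivity) (by positivity)]
      have : (N : ℝ) / C < ⌊(N : ℝ) / C⌋₊ + 1 := Nat.lt_floor_add_one _
      rw [div_lt_iff₀ hC] at this
      push_cast
      linarith
  calc min ((m : ℝ) / (2 * N)) (1 / (2 * C)) ≤ m' / (2 * N) := hmin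
    _ ≤ (#(G.filter (1 ≤ hitCount h m' ·)) : ℝ) / #G :=
        div_two_mul_le_card_filter_one_le_hitCount h hN h1 h2 (hm'm.trans hm) hCm'
    _ ≤ _ := card_filter_one_le_hitCount_mono h hm'm

lemma one_div_le_card_filter_le_hitCount (hG : G.Nonempty) (hN : 0 < N) (hC : 0 ≤ C)
    (h1 : ∀ i j, (#(G.filter fun g => g i = j) : ℝ) / #G = 1 / N)
    (h2 : ∀ p q : Fin n × Fin N, p ≠ q →
      (#(G.filter fun g => g p.1 = p.2 ∧ g q.1 = q.2) : ℝ) / #G ≤ C / (N : ℝ) ^ 2)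
    {k : ℕ} (hk : 1 ≤ k) (hkm : 2 * k * N ≤ m) (hm : m ≤ n * N) :
    1 / (2 + 4 * C) ≤ (#(G.filter (k ≤ hitCount h m ·)) : ℝ) / #G := by
  have hNr : (0 : ℝ) < N := by exact_mod_cast hN
  set P := (#(G.filter (k ≤ hitCount h m ·)) : ℝ) / #G
  set μ := (m : ℝ) / N with hμ
  have hkμ : 2 * (k : ℝ) ≤ μ := by
    rw [hμ, le_div_iff₀ hNr]
    exact_mod_cast hkm
  have hk1 : (1 : ℝ) ≤ k := by exact_mod_cast hk
  have hE2 : 𝔼 g ∈ G, (hitCount h m g : ℝ) ^ 2 ≤ μ + C * μ ^ 2 := by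
    have hpair : (m : ℝ) * (m - 1) * (C / N ^ 2) ≤ C * μ ^ 2 := by
      rw [show C * μ ^ 2 = m * m * (C / N ^ 2) by rw [hμ]; ring]
      gcongr
      linarith
    linarith [expect_hitCount_sq_le h h1 h2 hm]
  have hPZ : (μ - k) ^ 2 ≤ P * 𝔼 g ∈ G, (hitCount h m g : ℝ) ^ 2 := by
    have := paley_zygmund G (hitCount h m) hG k (by rw [expect_hitCount h h1 hm]; linarith)
    rwa [expect_hitCount h h1 hm] at this
  have hP : 0 ≤ P := by positivity
  have hhalf : μ ^ 2 / 4 ≤ (μ - k) ^ 2 := by nlinarith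
  have hμ2 : μ ≤ μ ^ 2 / 2 := by nlinarith
  have key : μ ^ 2 / 4 ≤ P * (μ ^ 2 / 2 + C * μ ^ 2) :=
    calc μ ^ 2 / 4 ≤ P * 𝔼 g ∈ G, (hitCount h m g : ℝ) ^ 2 := hhalf.trans hPZ
      _ ≤ P * (μ + C * μ ^ 2) := mul_le_mul_of_nonneg_left hE2 hP
      _ ≤ P * (μ ^ 2 / 2 + C * μ ^ 2) := by gcongr
  rw [div_le_iff₀ (by linarith)]
  refine le_of_mul_le_mul_right ?_ (pow_pos (by linarith : (0 : ℝ) < μ) 2)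
  linarith

end HitCount

theorem stmt4_general (n N ℓ : ℕ)
    (G : Finset (Fin n → Fin N)) (hG : G.Nonempty)
    (C : ℝ) (hC : 1 ≤ C)
    (h : Fin (n * N) ≃ Fin n × Fin N)
    (h1 : ∀ i : Fin n, ∀ j : Fin N,
      ((G.filter fun g => g i = j).card : ℝ) / G.card = 1 / N)
    (h2 : ∀ p q : Fin n × Fin N, p ≠ q →
      ((G.filter fun g => g p.1 = p.2 ∧ g q.1 = q.2).card : ℝ) / G.card
        ≤ C / (N : ℝ) ^ 2)
    (X : ℕ → (Fin n → Fin N) → ℕ)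
    (hX : ∀ m g, X m g =
      (Finset.univ.filter fun j : Fin (n * N) => j.val < m ∧ g (h j).1 = (h j).2).card) :
    (∀ m : ℕ, 1 ≤ m → m ≤ n * N →
      ((G.filter fun g => 1 ≤ X m g).card : ℝ) / G.card
        ≥ min ((m : ℝ) / (2 * N)) (1 / (2 * C)) *
          (((G.filter fun g => 1 ≤ X (ℓ * N) g).card : ℝ) / G.card)) ∧
    (∀ k m : ℕ, 2 * k * N ≤ m → m ≤ n * N →
      ((G.filter fun g => k ≤ X m g).card : ℝ) / G.card
        ≥ (((G.filter fun g => k ≤ X (ℓ * N) g).card : ℝ) / G.card) / (2 + 4 * C)) := by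
  obtain rfl : X = hitCount h := funext₂ fun m g => by rw [hX, hitCount, filter_filter]
  have hC0 : 0 < C := by linarith
  refine ⟨fun m hm1 hm => ?_, fun k m hkm hm => ?_⟩
  · have hN : 0 < N := Nat.pos_of_mul_pos_left (hm1.trans hm)
    calc min ((m : ℝ) / (2 * N)) (1 / (2 * C)) * (#(G.filter (1 ≤ hitCount h (ℓ * N) ·)) / #G)
        ≤ min ((m : ℝ) / (2 * N)) (1 / (2 * C)) :=
          mul_le_of_le_one_right (by positivity) (card_filter_div_card_le_one _ _)
      _ ≤ _ := min_le_card_filter_one_le_hitCount h hN hC0 h1 h2 hm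
  rcases Nat.eq_zero_or_pos N with rfl | hN
  · obtain rfl : m = 0 := by omega
    rw [mul_zero]
    exact div_le_self (by positivity) (by linarith)
  calc (#(G.filter (k ≤ hitCount h (ℓ * N) ·)) : ℝ) / #G / (2 + 4 * C) ≤ 1 / (2 + 4 * C) :=
        div_le_div_of_nonneg_right (card_filter_div_card_le_one _ _) (by positivity)
    _ ≤ _ := by
      rcases Nat.eq_zero_or_pos k with rfl | hk
      · rw [filter_true_of_mem fun g _ => Nat.zero_le _, div_self (by simpa using hG.ne_empty)]
        exact div_le_one_of_le₀ (by linarith) (by linarith)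
      · exact one_div_le_card_filter_le_hitCount h hG hN hC0.le h1 h2 hk hkm hm

/-- Lemma 3.3: comparison of the distribution of `X_m` with that of `X_{ℓN}`:
`P(X_m ≥ 1) ≥ min{m/(2N), 1/(2C_G)} · P(X_{ℓN} ≥ 1)` for `1 ≤ m ≤ nN`, and
`P(X_m ≥ k) ≥ P(X_{ℓN} ≥ k)/(2+4C_G)` for `2kN ≤ m ≤ nN`. -/
theorem stmt4 (n N ℓ : ℕ) (hℓ : ℓ ≤ n)
    (G : Finset (Fin n → Fin N)) (hG : G.Nonempty)
    (C : ℝ) (hC : 1 ≤ C)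
    (h : Fin (n * N) ≃ Fin n × Fin N)
    (h1 : ∀ i : Fin n, ∀ j : Fin N,
      ((G.filter fun g => g i = j).card : ℝ) / G.card = 1 / N)
    (h2 : ∀ p q : Fin n × Fin N, p ≠ q →
      ((G.filter fun g => g p.1 = p.2 ∧ g q.1 = q.2).card : ℝ) / G.card
        ≤ C / (N : ℝ) ^ 2)
    (X : ℕ → (Fin n → Fin N) → ℕ)
    (hX : ∀ m g, X m g =
      (Finset.univ.filter fun j : Fin (n * N) => j.val < m ∧ g (h j).1 = (h j).2).card) :
    (∀ m : ℕ, 1 ≤ m → m ≤ n * N →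
      ((G.filter fun g => 1 ≤ X m g).card : ℝ) / G.card
        ≥ min ((m : ℝ) / (2 * N)) (1 / (2 * C)) *
          (((G.filter fun g => 1 ≤ X (ℓ * N) g).card : ℝ) / G.card)) ∧
    (∀ k m : ℕ, 2 * k * N ≤ m → m ≤ n * N →
      ((G.filter fun g => k ≤ X m g).card : ℝ) / G.card
        ≥ (((G.filter fun g => k ≤ X (ℓ * N) g).card : ℝ) / G.card) / (2 + 4 * C)) :=
  stmt4_general n N ℓ G hG C hC h h1 h2 X hX
end

section
/- Let $a \in \R^{n\times N}$ and let $G$ be a finite collection of maps $g:\{1,\dots,n\}\to\{1,\dots,N\}$ with uniform probability $\Pro$, satisfying $\Pro(g(i)=j)=1/N$ for all $i,j$ and $\Pro(g(i_1)=j_1, g(i_2)=j_2) \le C_G/N^2$ for all distinct pairs $(i_1,j_1)\ne(i_2,j_2)$, where $C_G \ge 1$. Then for every $\ell \le n$, $\frac{1}{32(1+2C_G)^2} \cdot \frac{1}{N}\sum_{j=1}^{\ell N} s(j) \le \int_G \sum_{k=1}^{\ell} \kmax_{1\le i\le n} |a_{i g(i)}| \, d\Pro(g) \le \frac{2}{N}\sum_{j=1}^{\ell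 N} s(j)$, where $s(1) \ge s(2) \ge \dots \ge s(nN)$ is the decreasing rearrangement of $(|a_{ij}|)$ and $\kmax$ denotes the $k$-th largest value among $|a_{1g(1)}|,\dots,|a_{ng(n)}|$. -/
/-!
Write `S = ∑_{j ≤ ℓN} s(j)` and `t = s(ℓN)`. The sum of the `ℓ` largest entries of any vector
`x` is at most `∑ᵢ (xᵢ - t)⁺ + ℓ t`, with equality when `t` is its `ℓ`-th largest entry. Since
`g(i)` is uniform, averaging `∑ᵢ (|a_{i g(i)}| - t)⁺` over `G` gives `N⁻¹ ∑_{i,j} (|a_{ij}| - t)⁺`,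
and `∑_{i,j} (|a_{ij}| - t)⁺ + ℓ N t = S`; this is the upper bound.

For the lower bound, list the positions `p₀, p₁, …` of the entries of `a` in decreasing order of
`|a_p|` and keep, for each `g`, the first `ℓ` indices `j` with `g(pⱼ.1) = pⱼ.2`. These positions
lie in distinct rows, so their entries sum to at most the `ℓ` largest of the `|a_{i g(i)}|`. By
the pair bound and Markov's inequality, each index `j < m ≈ ℓN/(2C)` is kept with probability at
least `1/(2N)`, and `S ≤ 2C ∑_{j<m} s(j)` because the averages of a decreasing sequence decrease.
-/

/-- `kmax x k` is the `k`-th largest entry (1-indexed) of the vector `x`. -/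
noncomputable def kmax {n : ℕ} (x : Fin n → ℝ) (k : ℕ) : ℝ :=
  ((List.ofFn x).mergeSort (fun a b => decide (b ≤ a))).getD (k - 1) 0

/-- `smat a k` is the `k`-th largest entry (1-indexed) of `(|a i j|)`. -/
noncomputable def smat {n N : ℕ} (a : Fin n → Fin N → ℝ) (k : ℕ) : ℝ :=
  (((Finset.univ : Finset (Fin n × Fin N)).toList.map
      (fun p => |a p.1 p.2|)).mergeSort (fun a b => decide (b ≤ a))).getD (k - 1) 0

open Finset

noncomputable def sortDesc (l : List ℝ) : List ℝ := l.mergeSort (fun a b => decide (b ≤ a))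

lemma sortDesc_perm (l : List ℝ) : (sortDesc l).Perm l := List.mergeSort_perm _ _

lemma pairwise_sortDesc (l : List ℝ) : (sortDesc l).Pairwise (· ≥ ·) :=
  List.pairwise_mergeSort' (· ≥ ·) l

lemma getD_sortDesc_nonneg {l : List ℝ} (hl : ∀ y ∈ l, 0 ≤ y) (k : ℕ) :
    0 ≤ (sortDesc l).getD k 0 := by
  rw [List.getD_eq_getElem?_getD]
  cases h : (sortDesc l)[k]? with
  | none => rfl
  | some y => exact hl y ((sortDesc_perm l).mem_iff.1 (List.mem_of_getElem? h))

lemma antitone_getD_sortDesc {l : List ℝ} (hl : ∀ y ∈ l, 0 ≤ y) :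
    Antitone fun k => (sortDesc l).getD k 0 := by
  intro i j hij
  rcases lt_or_ge j (sortDesc l).length with hj | hj
  · simp only [List.getD_eq_getElem _ _ hj, List.getD_eq_getElem _ _ (hij.trans_lt hj)]
    exact (pairwise_sortDesc l).rel_get_of_le (a := ⟨i, hij.trans_lt hj⟩) (b := ⟨j, hj⟩) hij
  · simp only [List.getD_eq_default _ _ hj]
    exact getD_sortDesc_nonneg hl i

lemma sum_range_length_getD_sortDesc (l : List ℝ) (φ : ℝ → ℝ) :
    ∑ k ∈ range l.length, φ ((sortDesc l).getD k 0) = (l.map φ).sum := by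
  rw [← (sortDesc_perm l).length_eq, ← ((sortDesc_perm l).map φ).sum_eq, sum_range,
    ← List.sum_ofFn]
  congr 1
  exact List.ext_getElem (by simp) fun k _ _ => by simp

lemma exists_equiv_getD_sortDesc {ι : Type*} [Fintype ι] [DecidableEq ι] (f : ι → ℝ) :
    ∃ e : Fin (Fintype.card ι) ≃ ι, ∀ j, f (e j) = (sortDesc (univ.toList.map f)).getD j 0 := by
  set P := univ.toList.mergeSort (fun p q => decide (f q ≤ f p))
  have hP : P.Perm univ.toList := List.mergeSort_perm _ _
  have hsorted : P.Pairwise (fun p q => f q ≤ f p) := by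
    simpa using List.pairwise_mergeSort (le := fun p q => decide (f q ≤ f p))
      (fun _ _ _ h₁ h₂ => by simp only [decide_eq_true_eq] at *; linarith)
      (fun p q => by simpa using le_total (f q) (f p)) univ.toList
  have hmap : P.map f = sortDesc (univ.toList.map f) :=
    List.Perm.eq_of_pairwise' (r := (· ≥ ·)) (List.pairwise_map.2 hsorted) (pairwise_sortDesc _)
      ((hP.map f).trans (sortDesc_perm _).symm)
  have hlen : Fintype.card ι = P.length := by simp [hP.length_eq]
  refine ⟨(finCongr hlen).trans (List.Nodup.getEquivOfForallMemList P
    (hP.nodup_iff.2 (nodup_toList _)) fun x => hP.mem_iff.2 (mem_toList.2 (mem_univ x))),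
    fun j => ?_⟩
  rw [← hmap, List.getD_eq_getElem _ _ (by simp [← hlen])]
  simp

lemma Antitone.sum_range_eq_sum_posPart_add {s : ℕ → ℝ} (hs : Antitone s) {c L : ℕ}
    (hcL : c ≤ L) :
    ∑ k ∈ range c, s k = ∑ k ∈ range L, (s k - s (c - 1))⁺ + c * s (c - 1) := by
  have head : ∀ k ∈ range c, (s k - s (c - 1))⁺ = s k - s (c - 1) := fun k hk =>
    posPart_eq_self.2 (sub_nonneg.2 (hs (by simp at hk; omega)))
  have tail : ∀ k ∈ Ico c L, (s k - s (c - 1))⁺ = 0 := fun k hk =>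
    posPart_eq_zero.2 (sub_nonpos.2 (hs (by simp at hk; omega)))
  rw [← sum_range_add_sum_Ico _ hcL, sum_congr rfl head, sum_congr rfl tail, sum_sub_distrib]
  simp

lemma Antitone.mul_sum_range_le {s : ℕ → ℝ} (hs : Antitone s) {m M : ℕ} (hmM : m ≤ M) :
    m * ∑ k ∈ range M, s k ≤ M * ∑ k ∈ range m, s k := by
  induction M, hmM using Nat.le_induction with
  | base => rw [mul_comm]
  | succ M hmM ih =>
    have : m * s M ≤ ∑ k ∈ range m, s k := by
      simpa using card_nsmul_le_sum (range m) s (s M) fun k hk => hs (by simp at hk; omega)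
    rw [sum_range_succ]
    push_cast
    linarith

section

variable {n N : ℕ}

lemma kmax_nonneg {x : Fin n → ℝ} (hx : ∀ i, 0 ≤ x i) (k : ℕ) : 0 ≤ kmax x k :=
  getD_sortDesc_nonneg (by simpa using hx) _

lemma antitone_kmax_succ {x : Fin n → ℝ} (hx : ∀ i, 0 ≤ x i) :
    Antitone fun k => kmax x (k + 1) :=
  antitone_getD_sortDesc (by simpa using hx)

lemma sum_range_kmax_succ (x : Fin n → ℝ) (φ : ℝ → ℝ) :
    ∑ k ∈ range n, φ (kmax x (k + 1)) = ∑ i, φ (x i) := by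
  simpa [kmax, sortDesc, List.sum_ofFn] using sum_range_length_getD_sortDesc (List.ofFn x) φ

lemma nonneg_of_mem_map_abs {α : Type*} (l : List α) (f : α → ℝ) :
    ∀ y ∈ l.map fun p => |f p|, 0 ≤ y := by
  simp only [List.mem_map]
  rintro _ ⟨p, -, rfl⟩
  exact abs_nonneg _

lemma smat_nonneg (a : Fin n → Fin N → ℝ) (k : ℕ) : 0 ≤ smat a k :=
  getD_sortDesc_nonneg (nonneg_of_mem_map_abs _ _) _

lemma antitone_smat_succ (a : Fin n → Fin N → ℝ) : Antitone fun k => smat a (k + 1) :=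
  antitone_getD_sortDesc (nonneg_of_mem_map_abs _ _)

lemma sum_range_smat_succ (a : Fin n → Fin N → ℝ) (φ : ℝ → ℝ) :
    ∑ k ∈ range (n * N), φ (smat a (k + 1)) = ∑ i, ∑ j, φ |a i j| := by
  simpa [smat, sortDesc, Fintype.sum_prod_type] using
    sum_range_length_getD_sortDesc (univ.toList.map fun p : Fin n × Fin N => |a p.1 p.2|) φ

lemma sum_range_kmax_le (x : Fin n → ℝ) {c : ℕ} (hc : c ≤ n) (t : ℝ) :
    ∑ k ∈ range c, kmax x (k + 1) ≤ ∑ i, (x i - t)⁺ + c * t :=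
  calc ∑ k ∈ range c, kmax x (k + 1)
      ≤ ∑ k ∈ range c, ((kmax x (k + 1) - t)⁺ + t) :=
        sum_le_sum fun k _ => by linarith [le_posPart (kmax x (k + 1) - t)]
    _ ≤ ∑ k ∈ range n, (kmax x (k + 1) - t)⁺ + c * t := by
        rw [sum_add_distrib, sum_const, card_range, nsmul_eq_mul]
        gcongr
    _ = ∑ i, (x i - t)⁺ + c * t := by rw [sum_range_kmax_succ x fun y => (y - t)⁺]

lemma sum_le_sum_range_kmax {x : Fin n → ℝ} (hx : ∀ i, 0 ≤ x i) {c : ℕ} (hc : c ≤ n)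
    {R : Finset (Fin n)} (hR : #R ≤ c) :
    ∑ i ∈ R, x i ≤ ∑ k ∈ range c, kmax x (k + 1) := by
  set t := kmax x (c - 1 + 1)
  calc ∑ i ∈ R, x i
      ≤ ∑ i ∈ R, ((x i - t)⁺ + t) := sum_le_sum fun i _ => by linarith [le_posPart (x i - t)]
    _ ≤ ∑ i, (x i - t)⁺ + c * t := by
        rw [sum_add_distrib, sum_const, nsmul_eq_mul]
        gcongr
        · exact subset_univ R
        · exact kmax_nonneg hx _
    _ = ∑ k ∈ range c, kmax x (k + 1) := by
        rw [← sum_range_kmax_succ x fun y => (y - t)⁺,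
          (antitone_kmax_succ hx).sum_range_eq_sum_posPart_add hc]

lemma sum_sum_apply_eq_mul {ι κ : Type*} [Fintype ι] [Fintype κ] [DecidableEq κ]
    (G : Finset (ι → κ)) {u : ℝ} (hG : ∀ i j, (#{g ∈ G | g i = j} : ℝ) = u)
    (φ : ι → κ → ℝ) :
    ∑ g ∈ G, ∑ i, φ i (g i) = u * ∑ i, ∑ j, φ i j := by
  rw [sum_comm, mul_sum]
  refine sum_congr rfl fun i _ => ?_
  rw [← sum_fiberwise G (· i) (fun g => φ i (g i)), mul_sum]
  refine sum_congr rfl fun j _ => ?_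
  rw [sum_congr rfl fun g hg => by rw [(mem_filter.1 hg).2], sum_const, nsmul_eq_mul, hG, mul_comm]

lemma sum_sum_kmax_le {ℓ : ℕ} (hℓ : ℓ ≤ n) (hN : N ≠ 0) (a : Fin n → Fin N → ℝ)
    (G : Finset (Fin n → Fin N)) (hunif : ∀ i j, (#{g ∈ G | g i = j} : ℝ) = #G / N) :
    ∑ g ∈ G, ∑ k ∈ range ℓ, kmax (fun i => |a i (g i)|) (k + 1)
      ≤ #G / N * ∑ j ∈ range (ℓ * N), smat a (j + 1) := by
  set t := smat a (ℓ * N - 1 + 1)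
  calc ∑ g ∈ G, ∑ k ∈ range ℓ, kmax (fun i => |a i (g i)|) (k + 1)
      ≤ ∑ g ∈ G, (∑ i, (|a i (g i)| - t)⁺ + ℓ * t) :=
        sum_le_sum fun g _ => sum_range_kmax_le _ hℓ t
    _ = #G / N * (∑ i, ∑ j, (|a i j| - t)⁺ + (ℓ * N : ℕ) * t) := by
        rw [sum_add_distrib, sum_sum_apply_eq_mul G hunif fun i j => (|a i j| - t)⁺, sum_const,
          nsmul_eq_mul]
        field_simp
        push_cast
        ring
    _ = #G / N * ∑ j ∈ range (ℓ * N), smat a (j + 1) := by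
        rw [(antitone_smat_succ a).sum_range_eq_sum_posPart_add
          (Nat.mul_le_mul_right N hℓ), sum_range_smat_succ a fun y => (y - t)⁺]

def smallest {α : Type*} [LinearOrder α] (S : Finset α) (ℓ : ℕ) : Finset α :=
  {j ∈ S | #{j' ∈ S | j' < j} < ℓ}

lemma mem_smallest {α : Type*} [LinearOrder α] {S : Finset α} {ℓ : ℕ} {j : α} :
    j ∈ smallest S ℓ ↔ j ∈ S ∧ #{j' ∈ S | j' < j} < ℓ :=
  mem_filter

lemma card_smallest_le {α : Type*} [LinearOrder α] (S : Finset α) (ℓ : ℕ) :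
    #(smallest S ℓ) ≤ ℓ := by
  rcases (smallest S ℓ).eq_empty_or_nonempty with h | hne
  · simp [h]
  set j₀ := (smallest S ℓ).max' hne
  have hj₀ : j₀ ∈ smallest S ℓ := max'_mem _ hne
  have hsub : (smallest S ℓ).erase j₀ ⊆ {j' ∈ S | j' < j₀} := fun j hj => by
    obtain ⟨hne', hj⟩ := mem_erase.1 hj
    exact mem_filter.2 ⟨(mem_smallest.1 hj).1, lt_of_le_of_ne (le_max' _ _ hj) hne'⟩
  have hcard := card_le_card hsub
  rw [card_erase_of_mem hj₀] at hcard
  have := (mem_smallest.1 hj₀).2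
  omega

def hitIndices {ι κ : Type*} [DecidableEq κ] {m : ℕ} (q : Fin m → ι × κ) (g : ι → κ) :
    Finset (Fin m) :=
  {j | g (q j).1 = (q j).2}

lemma mem_hitIndices {ι κ : Type*} [DecidableEq κ] {m : ℕ} {q : Fin m → ι × κ} {g : ι → κ}
    {j : Fin m} : j ∈ hitIndices q g ↔ g (q j).1 = (q j).2 := by
  simp [hitIndices]

lemma sum_le_sum_range_kmax_of_subset_hitIndices {m ℓ : ℕ} (hℓ : ℓ ≤ n)
    (a : Fin n → Fin N → ℝ) (q : Fin m ↪ Fin n × Fin N) (g : Fin n → Fin N)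
    {T : Finset (Fin m)} (hT : T ⊆ hitIndices q g) (hTℓ : #T ≤ ℓ) :
    ∑ j ∈ T, |a (q j).1 (q j).2| ≤ ∑ k ∈ range ℓ, kmax (fun i => |a i (g i)|) (k + 1) := by
  have hit : ∀ j ∈ T, g (q j).1 = (q j).2 := fun j hj => mem_hitIndices.1 (hT hj)
  have hinj : Set.InjOn (fun j => (q j).1) T := fun j hj j' hj' (hrow : (q j).1 = (q j').1) =>
    q.injective (Prod.ext hrow (by rw [← hit j hj, ← hit j' hj', hrow]))
  calc ∑ j ∈ T, |a (q j).1 (q j).2|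
      = ∑ i ∈ T.image fun j => (q j).1, |a i (g i)| := by
        rw [sum_image hinj]
        exact sum_congr rfl fun j hj => by rw [hit j hj]
    _ ≤ _ := sum_le_sum_range_kmax (fun i => abs_nonneg _) hℓ (card_image_le.trans hTℓ)

lemma sub_le_card_filter_mem_smallest_hitIndices {ι κ : Type*} [DecidableEq κ] {m ℓ : ℕ}
    (hℓ : 0 < ℓ) (q : Fin m ↪ ι × κ) (G : Finset (ι → κ)) {u v : ℝ}
    (hunif : ∀ i j, (#{g ∈ G | g i = j} : ℝ) = u)
    (hpair : ∀ p p' : ι × κ, p ≠ p' →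
      (#{g ∈ G | g p.1 = p.2 ∧ g p'.1 = p'.2} : ℝ) ≤ v) (j : Fin m) :
    u - j * v / ℓ ≤ #{g ∈ G | j ∈ smallest (hitIndices q g) ℓ} := by
  set A := {g ∈ G | g (q j).1 = (q j).2}
  set F : (ι → κ) → ℕ := fun g => #{j' ∈ hitIndices q g | j' < j}
  have hsplit : #{g ∈ G | j ∈ smallest (hitIndices q g) ℓ} + #{g ∈ A | ℓ ≤ F g} = #A := by
    have : {g ∈ G | j ∈ smallest (hitIndices q g) ℓ} = {g ∈ A | ¬ ℓ ≤ F g} := by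
      ext g
      simp only [A, F, mem_filter, mem_smallest, mem_hitIndices, not_le, and_assoc]
    rw [this, add_comm]
    exact card_filter_add_card_filter_not _
  have hmarkov : ℓ * #{g ∈ A | ℓ ≤ F g} ≤ ∑ g ∈ A, F g := by
    rw [mul_comm, ← smul_eq_mul]
    exact (card_nsmul_le_sum _ F ℓ fun g hg => (mem_filter.1 hg).2).trans
      (sum_le_sum_of_subset (filter_subset _ _))
  have hdouble : ∑ g ∈ A, F g = ∑ j' ∈ Iio j, #{g ∈ A | g (q j').1 = (q j').2} := by
    simp only [F, card_eq_sum_ones]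
    exact sum_comm' fun g j' => by simp [mem_hitIndices, and_comm, and_assoc]
  have hpair' : ∀ j' ∈ Iio j, (#{g ∈ A | g (q j').1 = (q j').2} : ℝ) ≤ v := fun j' hj' => by
    rw [filter_filter]
    exact hpair _ _ (q.injective.ne (mem_Iio.1 hj').ne')
  have hbad : (ℓ : ℝ) * #{g ∈ A | ℓ ≤ F g} ≤ j * v := by
    calc (ℓ : ℝ) * #{g ∈ A | ℓ ≤ F g} ≤ ∑ j' ∈ Iio j, (#{g ∈ A | g (q j').1 = (q j').2} : ℝ) := by
          exact_mod_cast hmarkov.trans hdouble.le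
      _ ≤ j * v := by simpa using sum_le_card_nsmul _ _ _ hpair'
  have hA : (#A : ℝ) = u := hunif _ _
  have hℓ' : (0 : ℝ) < ℓ := by exact_mod_cast hℓ
  have hbad' : (#{g ∈ A | ℓ ≤ F g} : ℝ) ≤ j * v / ℓ := by
    rw [le_div_iff₀ hℓ']
    linarith
  have hsplit' : (#{g ∈ G | j ∈ smallest (hitIndices q g) ℓ} : ℝ) + #{g ∈ A | ℓ ≤ F g} = u := by
    rw [← hA]
    exact_mod_cast hsplit
  linarith

lemma card_mul_sum_le_sum_sum_kmax {m ℓ : ℕ} (hℓ : ℓ ≤ n) (hℓpos : 0 < ℓ) (hN : 0 < N)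
    (a : Fin n → Fin N → ℝ) (G : Finset (Fin n → Fin N)) {C : ℝ} (hC : 0 ≤ C)
    (hunif : ∀ i j, (#{g ∈ G | g i = j} : ℝ) = #G / N)
    (hpair : ∀ p p' : Fin n × Fin N, p ≠ p' →
      (#{g ∈ G | g p.1 = p.2 ∧ g p'.1 = p'.2} : ℝ) ≤ C * #G / N ^ 2)
    (q : Fin m ↪ Fin n × Fin N) (hm : 2 * C * (m - 1) ≤ ℓ * N) :
    #G / (2 * N) * ∑ j, |a (q j).1 (q j).2|
      ≤ ∑ g ∈ G, ∑ k ∈ range ℓ, kmax (fun i => |a i (g i)|) (k + 1) := by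
  have hgood : ∀ j : Fin m,
      (#G / (2 * N) : ℝ) ≤ #{g ∈ G | j ∈ smallest (hitIndices q g) ℓ} := fun j => by
    refine le_trans ?_ (sub_le_card_filter_mem_smallest_hitIndices hℓpos q G hunif hpair j)
    have hjC : 2 * C * j ≤ ℓ * N := by
      refine le_trans (mul_le_mul_of_nonneg_left ?_ (by positivity)) hm
      rw [le_sub_iff_add_le]
      exact_mod_cast j.isLt
    have hN' : (0 : ℝ) < N := by exact_mod_cast hN
    have hℓ' : (0 : ℝ) < ℓ := by exact_mod_cast hℓpos
    calc (#G / (2 * N) : ℝ) = #G / N - ℓ * N * (#G / N ^ 2) / (2 * ℓ) := by field_simp; ring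
      _ ≤ #G / N - 2 * C * j * (#G / N ^ 2) / (2 * ℓ) := by gcongr
      _ = #G / N - j * (C * #G / N ^ 2) / ℓ := by field_simp
  calc #G / (2 * N) * ∑ j, |a (q j).1 (q j).2|
      ≤ ∑ j, |a (q j).1 (q j).2| * #{g ∈ G | j ∈ smallest (hitIndices q g) ℓ} := by
        rw [mul_sum]
        exact sum_le_sum fun j _ => by
          rw [mul_comm]
          exact mul_le_mul_of_nonneg_left (hgood j) (abs_nonneg _)
    _ = ∑ g ∈ G, ∑ j ∈ smallest (hitIndices q g) ℓ, |a (q j).1 (q j).2| := by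
        rw [sum_comm' (t' := univ) (s' := fun j => {g ∈ G | j ∈ smallest (hitIndices q g) ℓ})
          fun g j => by simp]
        simp [mul_comm]
    _ ≤ _ := sum_le_sum fun g _ => sum_le_sum_range_kmax_of_subset_hitIndices hℓ a q g
          (filter_subset _ _) (card_smallest_le _ _)

lemma card_mul_sum_smat_le {ℓ : ℕ} (hℓ : ℓ ≤ n) (hℓpos : 0 < ℓ) (hN : 0 < N)
    (a : Fin n → Fin N → ℝ) (G : Finset (Fin n → Fin N)) {C : ℝ} (hC : 1 ≤ C)
    (hunif : ∀ i j, (#{g ∈ G | g i = j} : ℝ) = #G / N)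
    (hpair : ∀ p p' : Fin n × Fin N, p ≠ p' →
      (#{g ∈ G | g p.1 = p.2 ∧ g p'.1 = p'.2} : ℝ) ≤ C * #G / N ^ 2) :
    #G / (4 * C * N) * ∑ j ∈ range (ℓ * N), smat a (j + 1)
      ≤ ∑ g ∈ G, ∑ k ∈ range ℓ, kmax (fun i => |a i (g i)|) (k + 1) := by
  have hℓN : (0 : ℝ) < ℓ * N := by positivity
  set m := ⌈(ℓ * N : ℝ) / (2 * C)⌉₊
  have hm_pos : 0 < m := Nat.ceil_pos.2 (by positivity)
  have hm_le : m ≤ ℓ * N := by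
    rw [Nat.ceil_le, div_le_iff₀ (by positivity)]
    push_cast
    nlinarith
  have hm_lb : (ℓ * N : ℝ) ≤ 2 * C * m := by
    rw [← div_le_iff₀' (by positivity)]
    exact Nat.le_ceil _
  have hm_ub : 2 * C * (m - 1) ≤ ℓ * N := by
    have := Nat.ceil_lt_add_one (div_nonneg hℓN.le (by positivity : (0 : ℝ) ≤ 2 * C))
    rw [← le_div_iff₀' (by positivity)]
    linarith
  obtain ⟨e, he⟩ := exists_equiv_getD_sortDesc fun p : Fin n × Fin N => |a p.1 p.2|
  have hmcard : m ≤ Fintype.card (Fin n × Fin N) := by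
    simpa using hm_le.trans (Nat.mul_le_mul_right N hℓ)
  set q := (Fin.castLEEmb hmcard).trans e.toEmbedding
  have hq : ∀ j : Fin m, |a (q j).1 (q j).2| = smat a (j + 1) := fun j => he _
  have key := card_mul_sum_le_sum_sum_kmax hℓ hℓpos hN a G (by linarith) hunif hpair q hm_ub
  rw [sum_congr rfl fun j _ => hq j, Fin.sum_univ_eq_sum_range fun j => smat a (j + 1)] at key
  have hSm : 0 ≤ ∑ j ∈ range m, smat a (j + 1) := sum_nonneg fun j _ => smat_nonneg a _
  have hS : ∑ j ∈ range (ℓ * N), smat a (j + 1) ≤ 2 * C * ∑ j ∈ range m, smat a (j + 1) := by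
    have hcomp := (antitone_smat_succ a).mul_sum_range_le hm_le
    push_cast at hcomp
    have hm' : (0 : ℝ) < m := by exact_mod_cast hm_pos
    nlinarith [mul_le_mul_of_nonneg_right hm_lb hSm]
  calc #G / (4 * C * N) * ∑ j ∈ range (ℓ * N), smat a (j + 1)
      ≤ #G / (4 * C * N) * (2 * C * ∑ j ∈ range m, smat a (j + 1)) := by gcongr
    _ = #G / (2 * N) * ∑ j ∈ range m, smat a (j + 1) := by field_simp; ring
    _ ≤ _ := key

end

/-- Theorem 1.1 (main theorem): for a collection `G` of maps with uniform marginals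
and pairwise correlations bounded by `C_G/N²`, the expected sum of the `ℓ` largest
order statistics of `(|a_{i g(i)}|)` is comparable to `N⁻¹ ∑_{j=1}^{ℓN} s(j)`. -/
theorem stmt5 (n N ℓ : ℕ) (hℓ : ℓ ≤ n)
    (a : Fin n → Fin N → ℝ)
    (G : Finset (Fin n → Fin N)) (hG : G.Nonempty)
    (C : ℝ) (hC : 1 ≤ C)
    (h1 : ∀ i : Fin n, ∀ j : Fin N,
      ((G.filter fun g => g i = j).card : ℝ) / G.card = 1 / N)
    (h2 : ∀ p q : Fin n × Fin N, p ≠ q →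
      ((G.filter fun g => g p.1 = p.2 ∧ g q.1 = q.2).card : ℝ) / G.card
        ≤ C / (N : ℝ) ^ 2) :
    (1 / (32 * (1 + 2 * C) ^ 2)) * ((1 / N) * ∑ j ∈ Finset.range (ℓ * N), smat a (j + 1))
      ≤ (∑ g ∈ G, ∑ k ∈ Finset.range ℓ, kmax (fun i => |a i (g i)|) (k + 1)) / G.card ∧
    (∑ g ∈ G, ∑ k ∈ Finset.range ℓ, kmax (fun i => |a i (g i)|) (k + 1)) / G.card
      ≤ (2 / N) * ∑ j ∈ Finset.range (ℓ * N), smat a (j + 1) := by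
  rcases Nat.eq_zero_or_pos ℓ with rfl | hℓpos
  · simp
  have hN : 0 < N := (hG.choose ⟨0, by omega⟩).pos
  have hGpos : (0 : ℝ) < #G := by exact_mod_cast hG.card_pos
  have hunif : ∀ i j, (#{g ∈ G | g i = j} : ℝ) = #G / N := fun i j => by
    rw [(div_eq_iff hGpos.ne').1 (h1 i j)]
    ring
  have hpair : ∀ p p' : Fin n × Fin N, p ≠ p' →
      (#{g ∈ G | g p.1 = p.2 ∧ g p'.1 = p'.2} : ℝ) ≤ C * #G / N ^ 2 := fun p p' hpp' => by
    rw [mul_div_right_comm, ← div_le_iff₀ hGpos]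
    exact h2 p p' hpp'
  set S := ∑ j ∈ Finset.range (ℓ * N), smat a (j + 1)
  have hGS : 0 ≤ #G / N * S := by
    have := sum_nonneg fun j (_ : j ∈ range (ℓ * N)) => smat_nonneg a (j + 1)
    positivity
  constructor
  · rw [le_div_iff₀ hGpos]
    calc 1 / (32 * (1 + 2 * C) ^ 2) * (1 / N * S) * #G
        = 1 / (32 * (1 + 2 * C) ^ 2) * (#G / N * S) := by ring
      _ ≤ 1 / (4 * C) * (#G / N * S) := by
        gcongr <;> nlinarith
      _ = #G / (4 * C * N) * S := by field_simp
      _ ≤ _ := card_mul_sum_smat_le hℓ hℓpos hN a G hC hunif hpair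
  · rw [div_le_iff₀ hGpos]
    calc _ ≤ #G / N * S := sum_sum_kmax_le hℓ hN.ne' a G hunif
      _ ≤ 2 / N * S * #G := by linarith [show 2 / N * S * #G = 2 * (#G / N * S) by ring]
end

section
/- Let $a \in \R^{n\times n}$ with decreasing rearrangement $s(1)\ge\dots\ge s(n^2)$ of $(|a_{ij}|)$ and let $G = \{1,\dots,n\}^{\{1,\dots,n\}}$ be the set of all maps from $\{1,\dots,n\}$ to itself. Then for every $\ell \le n$, $\frac{1}{288}\cdot\frac{1}{n}\sum_{j=1}^{\ell n}s(j) \le \frac{1}{n^n}\sum_{g\in G}\sum_{k=1}^{\ell}\kmax_{1\le i\le n}|a_{ig(i)}| \le 2\cdot\frac{1}{n}\sum_{j=1}^{\ell n}s(j)$. -/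
open Finset
open scoped BigOperators

theorem Finset.countP_toList {α : Type*} (s : Finset α) (p : α → Prop) [DecidablePred p] :
    s.toList.countP (fun x => decide (p x)) = #{x ∈ s | p x} := by
  rw [← Multiset.coe_countP, coe_toList, Multiset.countP_eq_card_filter]
  rfl

namespace List

theorem pairwise_mergeSort_ge {α : Type*} [LinearOrder α] (l : List α) :
    (l.mergeSort fun x y => decide (y ≤ x)).Pairwise (· ≥ ·) :=
  pairwise_mergeSort' (· ≥ ·) l

theorem countP_ofFn {α : Type*} {n : ℕ} (f : Fin n → α) (p : α → Prop) [DecidablePred p] :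
    (ofFn f).countP (fun x => decide (p x)) = #{i | p (f i)} := by
  rw [← Multiset.coe_countP, ← Fin.univ_val_map, Multiset.countP_map]
  rfl

theorem getD_mem_of_lt {α : Type*} {l : List α} {k : ℕ} (hk : k < l.length) (d : α) :
    l.getD k d ∈ l := by
  rw [getD_eq_getElem _ _ hk]; exact getElem_mem hk

end List

theorem Antitone.eq_sum_range_ite_sub {α : Type*} [AddCommGroup α] [LinearOrder α] {f : ℕ → α}
    (hf : Antitone f) {j L : ℕ} (hjL : j ≤ L) (hL : f L = 0) :
    f j = ∑ m ∈ range L, if f m ≤ f j then f m - f (m + 1) else 0 := by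
  -- below `j` a level `f m ≤ f j` forces `f m = f (m + 1)`, so only `Ico j L` contributes
  have hlow : ∀ m ∈ range j, (if f m ≤ f j then f m - f (m + 1) else 0) = 0 := by
    intro m hm
    split_ifs with h
    · exact sub_eq_zero.2 (le_antisymm (h.trans (hf (mem_range.1 hm))) (hf m.le_succ))
    · rfl
  have hhigh : ∀ m ∈ Ico j L, (if f m ≤ f j then f m - f (m + 1) else 0) = f m - f (m + 1) :=
    fun m hm => if_pos (hf (mem_Ico.1 hm).1)
  rw [← sum_range_add_sum_Ico _ hjL, sum_eq_zero hlow, sum_congr rfl hhigh, zero_add, ← neg_inj,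
    ← sum_neg_distrib]
  simp only [neg_sub, sum_Ico_sub f hjL, hL, zero_sub]

namespace List

section Sorted

variable {α : Type*} [Zero α] [LinearOrder α]

theorem antitone_getD_of_pairwise_ge {l : List α} (hl : l.Pairwise (· ≥ ·))
    (hnn : ∀ x ∈ l, 0 ≤ x) : Antitone fun k => l.getD k 0 := by
  induction l with
  | nil => intro _ _ _; simp
  | cons x xs ih =>
    rw [pairwise_cons] at hl
    have hxs := ih hl.2 fun y hy => hnn y (mem_cons_of_mem x hy)
    refine antitone_nat_of_succ_le fun k => ?_
    cases k with
    | zero =>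
      cases xs with
      | nil => simpa using hnn x mem_cons_self
      | cons y ys => simpa using hl.1 y mem_cons_self
    | succ k => simpa using hxs (Nat.le_succ k)

theorem le_getD_iff_lt_countP {l : List α} (hl : l.Pairwise (· ≥ ·)) {k : ℕ}
    (hk : k < l.length) (t : α) : t ≤ l.getD k 0 ↔ k < l.countP (t ≤ ·) := by
  induction l generalizing k with
  | nil => simp at hk
  | cons x xs ih =>
    rw [pairwise_cons] at hl
    by_cases htx : t ≤ x
    · cases k with
      | zero => simp [htx]
      | succ k =>
        rw [getD_cons_succ, countP_cons, ih hl.2 (Nat.lt_of_succ_lt_succ hk)]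
        simp [htx]
    · have hxs : xs.countP (t ≤ ·) = 0 :=
        countP_eq_zero.2 fun y hy => by simpa using (hl.1 y hy).trans_lt (not_le.1 htx)
      cases k with
      | zero => simp [htx, hxs]
      | succ k =>
        have hmem := getD_mem_of_lt (Nat.lt_of_succ_lt_succ hk) 0
        have hlt : ¬ t ≤ xs.getD k 0 := fun h => htx (h.trans (hl.1 _ hmem))
        rw [getD_cons_succ, countP_cons, hxs]
        simpa [htx] using hlt

theorem sum_range_ite_le_getD {M : Type*} [AddCommMonoid M] {l : List α}
    (hl : l.Pairwise (· ≥ ·)) {ℓ : ℕ} (hℓ : ℓ ≤ l.length) (t : α) (w : M) :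
    ∑ k ∈ Finset.range ℓ, (if t ≤ l.getD k 0 then w else 0) = min ℓ (l.countP (t ≤ ·)) • w := by
  rw [sum_ite, sum_const_zero, add_zero, sum_const]
  congr 1
  rw [← card_range (min _ _)]
  congr 1
  ext k
  simp only [Finset.mem_filter, Finset.mem_range, lt_min_iff]
  exact and_congr_right fun hk => le_getD_iff_lt_countP hl (hk.trans_le hℓ) t

end Sorted

theorem sum_range_getD_eq_sum_min_countP_smul {α : Type*} [AddCommGroup α] [LinearOrder α]
    {s y : List α} (hs : s.Pairwise (· ≥ ·)) (hs0 : ∀ x ∈ s, 0 ≤ x) (hy : y.Pairwise (· ≥ ·))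
    (hys : y ⊆ s) {ℓ : ℕ} (hℓ : ℓ ≤ y.length) :
    ∑ k ∈ Finset.range ℓ, y.getD k 0 = ∑ m ∈ Finset.range s.length,
      min ℓ (y.countP (s.getD m 0 ≤ ·)) • (s.getD m 0 - s.getD (m + 1) 0) := by
  have hanti := antitone_getD_of_pairwise_ge hs hs0
  have hlevel : ∀ k ∈ Finset.range ℓ, y.getD k 0 = ∑ m ∈ Finset.range s.length,
      if s.getD m 0 ≤ y.getD k 0 then s.getD m 0 - s.getD (m + 1) 0 else 0 := by
    intro k hk
    have hky := getD_mem_of_lt ((Finset.mem_range.1 hk).trans_le hℓ) 0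
    obtain ⟨j, hj, hjk⟩ := getElem_of_mem (hys hky)
    rw [← hjk, ← getD_eq_getElem _ 0 hj]
    exact hanti.eq_sum_range_ite_sub hj.le (getD_eq_default _ _ le_rfl)
  rw [sum_congr rfl hlevel, sum_comm]
  exact sum_congr rfl fun m _ => sum_range_ite_le_getD hy hℓ _ _

end List

section RandomFunction

variable {ι κ : Type*} [Fintype ι] [DecidableEq ι] [Fintype κ]

theorem expect_prod_apply (h : ι → κ → ℝ) :
    𝔼 g : ι → κ, ∏ i, h i (g i) = ∏ i, 𝔼 j, h i j := by
  simp only [Fintype.expect_eq_sum_div_card, ← Fintype.prod_sum, Fintype.card_fun,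
    Nat.cast_pow, prod_div_distrib, prod_const, card_univ]

theorem expect_comp_apply [Nonempty κ] (i : ι) (F : κ → ℝ) :
    𝔼 g : ι → κ, F (g i) = 𝔼 j, F j := by
  have := expect_prod_apply fun k j => if k = i then F j else 1
  simp only [Fintype.prod_ite_eq'] at this
  rw [this, prod_eq_single i (fun k _ hk => by simp [hk]) (by simp)]
  simp

theorem expect_apply_mul_apply_eq_zero {i i' : ι} (hii' : i ≠ i') (F F' : κ → ℝ)
    (hF : 𝔼 j, F j = 0) : 𝔼 g : ι → κ, F (g i) * F' (g i') = 0 := by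
  have := expect_prod_apply fun k j => (if k = i then F j else 1) * (if k = i' then F' j else 1)
  simp only [prod_mul_distrib, Fintype.prod_ite_eq'] at this
  rw [this]
  exact prod_eq_zero (mem_univ i) (by simp [hii', hF])

theorem expect_sq_sum_apply [Nonempty κ] (d : ι → κ → ℝ) (hd : ∀ i, 𝔼 j, d i j = 0) :
    𝔼 g : ι → κ, (∑ i, d i (g i)) ^ 2 = ∑ i, 𝔼 j, d i j ^ 2 := by
  simp_rw [sq, Finset.sum_mul_sum, expect_sum_comm]
  refine sum_congr rfl fun i _ => ?_
  rw [sum_eq_single i (fun i' _ h => expect_apply_mul_apply_eq_zero h.symm _ _ (hd i)) (by simp)]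
  exact expect_comp_apply i fun j => d i j * d i j

theorem expect_indicator_mem [DecidableEq κ] (s : Finset κ) :
    𝔼 j, (if j ∈ s then 1 else 0 : ℝ) = #s / Fintype.card κ := by
  rw [Fintype.expect_eq_sum_div_card, sum_boole, filter_mem_eq_inter, univ_inter]

end RandomFunction

noncomputable def meanHits {ι κ : Type*} [Fintype ι] [Fintype κ] (S : ι → Finset κ) : ℝ :=
  ∑ i, (#(S i) : ℝ) / Fintype.card κ

theorem meanHits_nonneg {ι κ : Type*} [Fintype ι] [Fintype κ] (S : ι → Finset κ) :
    0 ≤ meanHits S := by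
  unfold meanHits; positivity

section Hits

variable {ι κ : Type*} [Fintype ι] [DecidableEq κ] (S : ι → Finset κ)

def hits (g : ι → κ) : ℕ := #{i | g i ∈ S i}

theorem hits_eq_sum (g : ι → κ) : (hits S g : ℝ) = ∑ i, if g i ∈ S i then 1 else 0 := by
  simp only [hits, natCast_card_filter]

theorem min_one_hits_eq (g : ι → κ) :
    min 1 (hits S g : ℝ) = 1 - ∏ i, (1 - if g i ∈ S i then 1 else 0) := by
  by_cases h : ∃ i, g i ∈ S i
  · obtain ⟨i, hi⟩ := h
    have hone : (1 : ℝ) ≤ hits S g := by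
      rw [hits_eq_sum]
      exact (single_le_sum (fun k _ => by positivity) (mem_univ i)).trans_eq' (by simp [hi])
    rw [min_eq_left hone, prod_eq_zero (mem_univ i) (by simp [hi]), sub_zero]
  · push Not at h
    simp [hits_eq_sum, h]

variable [DecidableEq ι] [Fintype κ] [Nonempty κ]

theorem expect_hits : 𝔼 g, (hits S g : ℝ) = meanHits S := by
  simp_rw [hits_eq_sum, expect_sum_comm]
  exact sum_congr rfl fun i _ =>
    (expect_comp_apply i fun j => if j ∈ S i then (1 : ℝ) else 0).trans
      (expect_indicator_mem (S i))

theorem expect_sq_hits_sub_meanHits_le :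
    𝔼 g, ((hits S g : ℝ) - meanHits S) ^ 2 ≤ meanHits S := by
  set p : ι → ℝ := fun i => #(S i) / Fintype.card κ
  set d : ι → κ → ℝ := fun i j => (if j ∈ S i then 1 else 0) - p i
  have hcentered : ∀ i, 𝔼 j, d i j = 0 := fun i => by
    simp only [d, expect_sub_distrib, expect_indicator_mem (S i), Fintype.expect_const, p, sub_self]
  have hsq : ∀ i, 𝔼 j, d i j ^ 2 = p i - p i ^ 2 := fun i => by
    have : ∀ j, d i j ^ 2 = (1 - 2 * p i) * (if j ∈ S i then 1 else 0) + p i ^ 2 := fun j => by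
      by_cases hj : j ∈ S i <;> simp [d, hj]; ring
    simp_rw [this, expect_add_distrib, ← mul_expect, expect_indicator_mem (S i),
      Fintype.expect_const]
    ring
  have hdev : ∀ g : ι → κ, (hits S g : ℝ) - meanHits S = ∑ i, d i (g i) := fun g => by
    simp [d, hits_eq_sum, meanHits, p, sum_sub_distrib]
  simp_rw [hdev, expect_sq_sum_apply d hcentered, hsq]
  exact (sum_le_sum fun i _ => sub_le_self _ (sq_nonneg _)).trans_eq rfl

theorem one_sub_exp_neg_meanHits_le :
    1 - Real.exp (-meanHits S) ≤ 𝔼 g, min 1 (hits S g : ℝ) := by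
  simp_rw [min_one_hits_eq, expect_sub_distrib, Fintype.expect_const]
  rw [expect_prod_apply fun i j => 1 - if j ∈ S i then (1 : ℝ) else 0]
  refine sub_le_sub_left ?_ 1
  rw [meanHits, ← sum_neg_distrib, Real.exp_sum]
  refine prod_le_prod (fun i _ => ?_) fun i _ => ?_
  · rw [expect_sub_distrib, Fintype.expect_const, expect_indicator_mem, sub_nonneg]
    exact div_le_one_of_le₀ (by exact_mod_cast card_le_univ (S i)) (by positivity)
  · rw [expect_sub_distrib, Fintype.expect_const, expect_indicator_mem]
    exact Real.one_sub_le_exp_neg _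

theorem meanHits_div_nine_le_expect_min_hits_of_le_eight {c : ℝ} (hc : 1 ≤ c)
    (hμ : meanHits S ≤ 8) :
    meanHits S / 9 ≤ 𝔼 g, min c (hits S g : ℝ) := by
  have hμ0 := meanHits_nonneg S
  calc meanHits S / 9 ≤ 1 - Real.exp (-meanHits S) := by
        have hexp : (Real.exp (meanHits S))⁻¹ ≤ (1 + meanHits S)⁻¹ :=
          inv_anti₀ (by positivity) (by linarith [Real.add_one_le_exp (meanHits S)])
        rw [Real.exp_neg]
        have : meanHits S / 9 ≤ 1 - (1 + meanHits S)⁻¹ := by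
          rw [div_le_iff₀ (by norm_num), inv_eq_one_div, one_sub_div (by positivity)]
          rw [add_sub_cancel_left, ← mul_div_right_comm, le_div_iff₀ (by positivity)]
          nlinarith
        linarith
    _ ≤ 𝔼 g, min 1 (hits S g : ℝ) := one_sub_exp_neg_meanHits_le S
    _ ≤ 𝔼 g, min c (hits S g : ℝ) := expect_le_expect fun g _ => min_le_min_right _ hc

theorem min_meanHits_div_four_le_expect_min_hits_of_eight_le {c : ℝ} (hc : 0 ≤ c)
    (hμ : 8 ≤ meanHits S) :
    min c (meanHits S) / 4 ≤ 𝔼 g, min c (hits S g : ℝ) := by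
  set μ := meanHits S
  have hμ0 : 0 < μ := by linarith
  set b := min c (μ / 2)
  have hb : 0 ≤ b := le_min hc (by linarith)
  -- Chebyshev's inequality, pointwise: the bracket is negative unless `hits S g ≥ μ / 2`.
  have hpt : ∀ g : ι → κ,
      b * (1 - 4 * ((hits S g : ℝ) - μ) ^ 2 / μ ^ 2) ≤ min c (hits S g : ℝ) := by
    intro g
    by_cases hg : μ / 2 ≤ hits S g
    · calc b * (1 - 4 * ((hits S g : ℝ) - μ) ^ 2 / μ ^ 2) ≤ b * 1 :=
            mul_le_mul_of_nonneg_left (sub_le_self _ (by positivity)) hb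
        _ ≤ min c (hits S g : ℝ) := (mul_one b).trans_le (min_le_min_left c hg)
    · have hneg : 1 - 4 * ((hits S g : ℝ) - μ) ^ 2 / μ ^ 2 ≤ 0 := by
        rw [sub_nonpos, le_div_iff₀ (by positivity)]
        nlinarith
      exact (mul_nonpos_of_nonneg_of_nonpos hb hneg).trans (le_min hc (Nat.cast_nonneg _))
  set V := 𝔼 g, ((hits S g : ℝ) - μ) ^ 2
  have hvar : 4 * V / μ ^ 2 ≤ 1 / 2 := by
    rw [div_le_iff₀ (by positivity)]
    nlinarith [expect_sq_hits_sub_meanHits_le S]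
  calc min c μ / 4 ≤ b * (1 - 1 / 2) := by
        have : min c μ / 2 ≤ b :=
          le_min (by linarith [min_le_left c μ]) (by linarith [min_le_right c μ])
        linarith
    _ ≤ b * (1 - 4 * V / μ ^ 2) := by gcongr
    _ = 𝔼 g, b * (1 - 4 * ((hits S g : ℝ) - μ) ^ 2 / μ ^ 2) := by
        rw [← mul_expect, expect_sub_distrib, Fintype.expect_const, ← expect_div, ← mul_expect]
    _ ≤ 𝔼 g, min c (hits S g : ℝ) := expect_le_expect fun g _ => hpt g

theorem min_meanHits_div_nine_le_expect_min_hits {c : ℝ} (hc : 1 ≤ c) :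
    min c (meanHits S) / 9 ≤ 𝔼 g, min c (hits S g : ℝ) := by
  rcases le_total (meanHits S) 8 with hμ | hμ
  · exact (div_le_div_of_nonneg_right (min_le_right _ _) (by norm_num)).trans
      (meanHits_div_nine_le_expect_min_hits_of_le_eight S hc hμ)
  · refine le_trans ?_ (min_meanHits_div_four_le_expect_min_hits_of_eight_le S (by linarith) hμ)
    have : 0 ≤ min c (meanHits S) := le_min (by linarith) (meanHits_nonneg S)
    linarith

theorem expect_min_hits_le_min_meanHits (c : ℝ) :
    𝔼 g, min c (hits S g : ℝ) ≤ min c (meanHits S) :=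
  le_min ((expect_le_expect fun _ _ => min_le_left _ _).trans_eq (Fintype.expect_const c))
    ((expect_le_expect fun _ _ => min_le_right _ _).trans_eq (expect_hits S))

end Hits

section Matrix

variable {n N : ℕ} (a : Fin n → Fin N → ℝ)

noncomputable def sortedAbs : List ℝ :=
  ((univ : Finset (Fin n × Fin N)).toList.map fun p => |a p.1 p.2|).mergeSort
    fun x y => decide (y ≤ x)

noncomputable def absSuperlevel (t : ℝ) (i : Fin n) : Finset (Fin N) := {j | t ≤ |a i j|}

theorem pairwise_sortedAbs : (sortedAbs a).Pairwise (· ≥ ·) := List.pairwise_mergeSort_ge _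

theorem length_sortedAbs : (sortedAbs a).length = n * N := by
  simp [sortedAbs]

theorem mem_sortedAbs {x : ℝ} : x ∈ sortedAbs a ↔ ∃ i j, |a i j| = x := by
  simp [sortedAbs, List.mem_mergeSort]

theorem nonneg_of_mem_sortedAbs {x : ℝ} (hx : x ∈ sortedAbs a) : 0 ≤ x := by
  obtain ⟨i, j, rfl⟩ := (mem_sortedAbs a).1 hx
  exact abs_nonneg _

theorem countP_sortedAbs (t : ℝ) :
    (sortedAbs a).countP (t ≤ ·) = ∑ i, #(absSuperlevel a t i) := by
  rw [sortedAbs, (List.mergeSort_perm _ _).countP_eq, List.countP_map]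
  simp only [Function.comp_def]
  rw [countP_toList, card_filter, Fintype.sum_prod_type]
  simp only [absSuperlevel, card_filter]

noncomputable def levelGap (m : ℕ) : ℝ := (sortedAbs a).getD m 0 - (sortedAbs a).getD (m + 1) 0

theorem levelGap_nonneg (m : ℕ) : 0 ≤ levelGap a m :=
  sub_nonneg.2 (List.antitone_getD_of_pairwise_ge (pairwise_sortedAbs a)
    (fun _ => nonneg_of_mem_sortedAbs a) m.le_succ)

theorem sum_range_smat {r : ℕ} (hr : r ≤ n * N) :
    ∑ j ∈ range r, smat a (j + 1) = ∑ m ∈ range (n * N),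
      min r (∑ i, #(absSuperlevel a ((sortedAbs a).getD m 0) i)) • levelGap a m := by
  rw [← length_sortedAbs a] at hr ⊢
  simp_rw [← countP_sortedAbs]
  exact List.sum_range_getD_eq_sum_min_countP_smul (pairwise_sortedAbs a)
    (fun _ => nonneg_of_mem_sortedAbs a) (pairwise_sortedAbs a) (List.Subset.refl _) hr

theorem sum_range_kmax (g : Fin n → Fin N) {ℓ : ℕ} (hℓ : ℓ ≤ n) :
    ∑ k ∈ range ℓ, kmax (fun i => |a i (g i)|) (k + 1) = ∑ m ∈ range (n * N),
      min ℓ (hits (absSuperlevel a ((sortedAbs a).getD m 0)) g) • levelGap a m := by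
  have hy := List.pairwise_mergeSort_ge (List.ofFn fun i => |a i (g i)|)
  have hys : (List.ofFn fun i => |a i (g i)|).mergeSort (fun x y => decide (y ≤ x)) ⊆
      sortedAbs a := fun x hx => by
    rw [List.mem_mergeSort, List.mem_ofFn] at hx
    obtain ⟨i, rfl⟩ := hx
    exact (mem_sortedAbs a).2 ⟨i, g i, rfl⟩
  rw [← length_sortedAbs a]
  refine (List.sum_range_getD_eq_sum_min_countP_smul (pairwise_sortedAbs a)
    (fun _ => nonneg_of_mem_sortedAbs a) hy hys (by simpa using hℓ)).trans
    (sum_congr rfl fun m _ => ?_)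
  rw [(List.mergeSort_perm _ _).countP_eq, List.countP_ofFn]
  simp [hits, absSuperlevel, levelGap]

theorem expect_sum_range_kmax {ℓ : ℕ} (hℓ : ℓ ≤ n) :
    𝔼 g : Fin n → Fin N, ∑ k ∈ range ℓ, kmax (fun i => |a i (g i)|) (k + 1) =
      ∑ m ∈ range (n * N), levelGap a m *
        𝔼 g, min (ℓ : ℝ) (hits (absSuperlevel a ((sortedAbs a).getD m 0)) g) := by
  simp_rw [sum_range_kmax a _ hℓ, expect_sum_comm, nsmul_eq_mul, Nat.cast_min, mul_expect,
    mul_comm]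

theorem inv_mul_sum_range_smat [NeZero N] {ℓ : ℕ} (hℓ : ℓ ≤ n) :
    (N : ℝ)⁻¹ * ∑ j ∈ range (ℓ * N), smat a (j + 1) = ∑ m ∈ range (n * N),
      levelGap a m * min (ℓ : ℝ) (meanHits (absSuperlevel a ((sortedAbs a).getD m 0))) := by
  rw [sum_range_smat a (Nat.mul_le_mul_right N hℓ), mul_sum]
  refine sum_congr rfl fun m _ => ?_
  have hN : (0 : ℝ) < N := by exact_mod_cast Nat.pos_of_neZero N
  rw [nsmul_eq_mul, meanHits, ← sum_div, Fintype.card_fin, ← Nat.cast_sum, Nat.cast_min,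
    Nat.cast_mul]
  generalize ((∑ i, #(absSuperlevel a ((sortedAbs a).getD m 0) i) : ℕ) : ℝ) = C
  have : min (ℓ : ℝ) (C / N) = min ((ℓ : ℝ) * N) C / N := by
    rw [← min_div_div_right hN.le, mul_div_cancel_right₀ _ hN.ne']
  rw [this]
  ring

end Matrix

/-- Example 2: the main theorem for `G` the set of all self-maps of `{1,…,n}`. -/
theorem stmt7 (n ℓ : ℕ) (hℓ : ℓ ≤ n) (a : Fin n → Fin n → ℝ) :
    (1 / 288) * ((1 / n) * ∑ j ∈ Finset.range (ℓ * n), smat a (j + 1))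
      ≤ (∑ g : Fin n → Fin n,
          ∑ k ∈ Finset.range ℓ, kmax (fun i => |a i (g i)|) (k + 1)) / ((n : ℝ) ^ n) ∧
    (∑ g : Fin n → Fin n,
          ∑ k ∈ Finset.range ℓ, kmax (fun i => |a i (g i)|) (k + 1)) / ((n : ℝ) ^ n)
      ≤ 2 * ((1 / n) * ∑ j ∈ Finset.range (ℓ * n), smat a (j + 1)) := by
  rcases Nat.eq_zero_or_pos ℓ with rfl | hℓ0
  · simp
  have : NeZero n := ⟨(hℓ0.trans_le hℓ).ne'⟩
  have havg : (∑ g : Fin n → Fin n, ∑ k ∈ range ℓ, kmax (fun i => |a i (g i)|) (k + 1)) /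
      (n : ℝ) ^ n = 𝔼 g : Fin n → Fin n, ∑ k ∈ range ℓ, kmax (fun i => |a i (g i)|) (k + 1) := by
    rw [Fintype.expect_eq_sum_div_card, Fintype.card_fun, Fintype.card_fin, Nat.cast_pow]
  rw [havg, expect_sum_range_kmax a hℓ, one_div (n : ℝ), inv_mul_sum_range_smat a hℓ, mul_sum,
    mul_sum]
  refine ⟨sum_le_sum fun m _ => ?_, sum_le_sum fun m _ => ?_⟩
  all_goals
    set S := absSuperlevel a ((sortedAbs a).getD m 0)
    have hgap := levelGap_nonneg a m
    have hmin : 0 ≤ min (ℓ : ℝ) (meanHits S) := le_min (Nat.cast_nonneg ℓ) (meanHits_nonneg S)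
  · have hlow := min_meanHits_div_nine_le_expect_min_hits S (c := ℓ) (by exact_mod_cast hℓ0)
    nlinarith [mul_le_mul_of_nonneg_left hlow hgap, mul_nonneg hgap hmin]
  · have hup := expect_min_hits_le_min_meanHits S (ℓ : ℝ)
    nlinarith [mul_le_mul_of_nonneg_left hup hgap, mul_nonneg hgap hmin]
end

section
/- Let $j, n \in \mathbb{N}$ with $1 \le j \le n$, and define the Orlicz function $M_j(t) = \max(t - 1/j, 0)$ for $t \ge 0$. Then for every $x \in \R^n$, $\frac{1}{2}\sum_{i=1}^j x_i^* \le \|x\|_{M_j} \le \sum_{i=1}^j x_i^*$, where $(x_i^*)_{i=1}^n$ is the decreasing rearrangement of $(|x_i|)_{i=1}^n$ and $\|x\|_{M_j} = \inf\{\lambda > 0 : \sum_{i=1}^n M_j(|x_i|/\lambda) \le 1\}$ is the Luxemburg norm. -/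
/-- `drear x k` is the `k`-th largest entry (1-indexed) of `(|x i|)`. -/
noncomputable def drear {n : ℕ} (x : Fin n → ℝ) (k : ℕ) : ℝ :=
  ((List.ofFn fun i => |x i|).mergeSort (fun a b => decide (b ≤ a))).getD (k - 1) 0

/-- The Luxemburg norm associated to the Orlicz function `M_j(t) = max(t - 1/j, 0)`. -/
noncomputable def luxNorm {n : ℕ} (j : ℕ) (x : Fin n → ℝ) : ℝ :=
  sInf {lam : ℝ | 0 < lam ∧ ∑ i, max (|x i| / lam - 1 / (j : ℝ)) 0 ≤ 1}

/-- Lemma 4.1 (C. Schütt): the sum of the `j` largest entries of `(|x i|)` is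
equivalent, up to factor 2, to the Luxemburg norm with Orlicz function
`M_j(t) = max(t - 1/j, 0)`. -/
theorem stmt9 (n j : ℕ) (hj1 : 1 ≤ j) (hjn : j ≤ n) (x : Fin n → ℝ) :
    (1 / 2) * ∑ i ∈ Finset.range j, drear x (i + 1) ≤ luxNorm j x ∧
    luxNorm j x ≤ ∑ i ∈ Finset.range j, drear x (i + 1) := by
  have hn : 1 ≤ n := le_trans hj1 hjn
  have hjR : (0:ℝ) < j := by exact_mod_cast hj1
  classical
  set S := (List.ofFn fun i => |x i|).mergeSort (fun a b => decide (b ≤ a)) with hS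
  have hlen : S.length = n := by simp [hS]
  have hperm : S.Perm (List.ofFn fun i => |x i|) := List.mergeSort_perm _ _
  have hpair : S.Pairwise (fun a b => b ≤ a) := by
    have h := List.pairwise_mergeSort (le := fun a b : ℝ => decide (b ≤ a))
      (fun a b c h1 h2 => by
        simp only [decide_eq_true_iff] at *; linarith)
      (fun a b => by simpa using le_total b a)
      (List.ofFn fun i => |x i|)
    rw [← hS] at h
    simpa using h
  have hmono : ∀ k l : ℕ, k ≤ l → l < n → S.getD l 0 ≤ S.getD k 0 := by
    intro k l hkl hl
    rcases eq_or_lt_of_le hkl with rfl | h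
    · exact le_refl _
    · rw [List.getD_eq_getElem S 0 (by omega : l < S.length),
        List.getD_eq_getElem S 0 (by omega : k < S.length)]
      exact (List.pairwise_iff_getElem.mp hpair) k l (by omega) (by omega) h
  have hnonneg : ∀ k : ℕ, 0 ≤ S.getD k 0 := by
    intro k
    by_cases hk : k < n
    · rw [List.getD_eq_getElem S 0 (by omega : k < S.length)]
      have hm : S[k] ∈ S := List.getElem_mem _
      have hm' := hperm.mem_iff.mp hm
      rw [List.mem_ofFn] at hm'
      obtain ⟨i, hi⟩ := hm'
      rw [← hi]; positivity
    · rw [List.getD_eq_default S 0 (by omega)]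
  have hsum : ∀ g : ℝ → ℝ, ∑ i : Fin n, g |x i| = ∑ k ∈ Finset.range n, g (S.getD k 0) := by
    intro g
    have h1 : (S.map g).sum = ((List.ofFn fun i => |x i|).map g).sum := (hperm.map g).sum_eq
    have h2 : ((List.ofFn fun i => |x i|).map g).sum = ∑ i : Fin n, g |x i| := by
      rw [List.map_ofFn, List.sum_ofFn]; rfl
    have h3 : (S.map g).sum = ∑ k ∈ Finset.range S.length, g (S.getD k 0) := by
      rw [← List.ofFn_getElem_eq_map S g, List.sum_ofFn, ← Fin.sum_univ_eq_sum_range]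
      exact Finset.sum_congr rfl fun i _ => by rw [List.getD_eq_getElem S 0 i.isLt]
    rw [← h2, ← h1, h3, hlen]
  have hdrear : ∀ i : ℕ, drear x (i + 1) = S.getD i 0 := by
    intro i; simp [drear, hS]
  set s := ∑ i ∈ Finset.range j, drear x (i + 1) with hs
  have hs' : s = ∑ k ∈ Finset.range j, S.getD k 0 := by
    rw [hs]; exact Finset.sum_congr rfl fun i _ => hdrear i
  have hs0 : 0 ≤ s := by
    rw [hs']; exact Finset.sum_nonneg fun k _ => hnonneg k
  rcases eq_or_lt_of_le hs0 with hzero | hspos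
  · -- s = 0 : all entries vanish
    have hall : ∀ k ∈ Finset.range j, S.getD k 0 = 0 := by
      have := (Finset.sum_eq_zero_iff_of_nonneg fun k _ => hnonneg k).mp (hs' ▸ hzero.symm)
      exact this
    have h0 : S.getD 0 0 = 0 := hall 0 (Finset.mem_range.mpr hj1)
    have hx0 : ∀ i : Fin n, |x i| = 0 := by
      intro i
      have hm : |x i| ∈ S := hperm.mem_iff.mpr (by rw [List.mem_ofFn]; exact ⟨i, rfl⟩)
      obtain ⟨k, hk, hke⟩ := List.mem_iff_getElem.mp hm
      have hle : |x i| ≤ S.getD 0 0 := by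
        rw [← hke, ← List.getD_eq_getElem S 0 hk]
        exact hmono 0 k (Nat.zero_le _) (by omega)
      have := abs_nonneg (x i)
      linarith [hle, h0 ▸ hle]
    have hset : {lam : ℝ | 0 < lam ∧ ∑ i, max (|x i| / lam - 1 / (j : ℝ)) 0 ≤ 1}
        = Set.Ioi 0 := by
      ext lam
      simp only [Set.mem_setOf_eq, Set.mem_Ioi, and_iff_left_iff_imp]
      intro _
      have : ∀ i : Fin n, max (|x i| / lam - 1 / (j : ℝ)) 0 = 0 := by
        intro i
        rw [hx0 i]
        have : (0:ℝ) ≤ 1 / (j : ℝ) := by positivity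
        simp only [zero_div, zero_sub]
        exact max_eq_right (by linarith)
      rw [Finset.sum_congr rfl fun i _ => this i]
      simp
    have hlux : luxNorm j x = 0 := by
      rw [luxNorm, hset, csInf_Ioi]
    rw [hlux, ← hzero]
    norm_num
  · -- s > 0
    have hjm : j - 1 < n := by omega
    have htop : S.getD (j-1) 0 ≤ s / j := by
      have hsum' : (j : ℝ) * S.getD (j-1) 0 ≤ s := by
        rw [hs']
        calc (j : ℝ) * S.getD (j-1) 0 = ∑ k ∈ Finset.range j, S.getD (j-1) 0 := by
              rw [Finset.sum_const, Finset.card_range, nsmul_eq_mul]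
          _ ≤ ∑ k ∈ Finset.range j, S.getD k 0 := by
              refine Finset.sum_le_sum fun k hk => ?_
              exact hmono k (j-1) (by simp at hk; omega) hjm
      rw [le_div_iff₀ hjR, mul_comm]
      exact hsum'
    have hmem : s ∈ {lam : ℝ | 0 < lam ∧ ∑ i, max (|x i| / lam - 1 / (j : ℝ)) 0 ≤ 1} := by
      refine ⟨hspos, ?_⟩
      rw [hsum (fun t => max (t / s - 1 / (j : ℝ)) 0)]
      have hzero' : ∀ k ∈ Finset.range n, k ∉ Finset.range j →
          max (S.getD k 0 / s - 1 / (j : ℝ)) 0 = 0 := by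
        intro k hk hk'
        simp only [Finset.mem_range] at hk hk'
        have h1 : S.getD k 0 ≤ S.getD (j-1) 0 := hmono (j-1) k (by omega) hk
        have h2 : S.getD k 0 / s ≤ 1 / (j : ℝ) := by
          rw [div_le_div_iff₀ hspos hjR]
          have := le_trans h1 htop
          calc S.getD k 0 * j ≤ (s / j) * j := by
                exact mul_le_mul_of_nonneg_right this hjR.le
            _ = s := by field_simp
            _ = 1 * s := by ring
        exact max_eq_right (by linarith)
      rw [← Finset.sum_subset (Finset.range_subset_range.mpr hjn) hzero']
      calc ∑ k ∈ Finset.range j, max (S.getD k 0 / s - 1 / (j : ℝ)) 0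
          ≤ ∑ k ∈ Finset.range j, S.getD k 0 / s := by
            refine Finset.sum_le_sum fun k _ => ?_
            have h1 : (0:ℝ) ≤ 1 / (j : ℝ) := by positivity
            have h2 : 0 ≤ S.getD k 0 / s := div_nonneg (hnonneg k) hspos.le
            exact max_le (by linarith) h2
        _ = s / s := by rw [← Finset.sum_div, ← hs']
        _ = 1 := div_self (ne_of_gt hspos)
    constructor
    · -- lower bound
      refine le_csInf ⟨s, hmem⟩ fun lam hlam => ?_
      obtain ⟨hlam0, hlam1⟩ := hlam
      rw [hsum (fun t => max (t / lam - 1 / (j : ℝ)) 0)] at hlam1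
      have hsub : ∑ k ∈ Finset.range j, max (S.getD k 0 / lam - 1 / (j : ℝ)) 0
          ≤ ∑ k ∈ Finset.range n, max (S.getD k 0 / lam - 1 / (j : ℝ)) 0 :=
        Finset.sum_le_sum_of_subset_of_nonneg (Finset.range_subset_range.mpr hjn)
          fun k _ _ => le_max_right _ _
      have hlb : s / lam - 1 ≤ ∑ k ∈ Finset.range j, max (S.getD k 0 / lam - 1 / (j : ℝ)) 0 := by
        have : ∑ k ∈ Finset.range j, (S.getD k 0 / lam - 1 / (j : ℝ))
            ≤ ∑ k ∈ Finset.range j, max (S.getD k 0 / lam - 1 / (j : ℝ)) 0 :=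
          Finset.sum_le_sum fun k _ => le_max_left _ _
        have heq : ∑ k ∈ Finset.range j, (S.getD k 0 / lam - 1 / (j : ℝ)) = s / lam - 1 := by
          rw [Finset.sum_sub_distrib, ← Finset.sum_div, ← hs', Finset.sum_const,
            Finset.card_range, nsmul_eq_mul]
          field_simp
        linarith
      have : s / lam ≤ 2 := by linarith
      have hsle : s ≤ 2 * lam := by
        rw [div_le_iff₀ hlam0] at this; linarith
      linarith
    · -- upper bound
      exact csInf_le ⟨0, fun y hy => hy.1.le⟩ hmem
end

section
/- For every $x \in \R^n$ and $1 \le j \le n$, the sum of the $j$ largest entries of $(|x_i|)$ satisfies $\sum_{k=1}^n \max\Big(\frac{|x_k|}{\sum_{i=1}^j x_i^*} - \frac{1}{j}, 0\Big) \le 1$, where $(x_i^*)$ denotes the decreasing rearrangement of $(|x_i|)$ and we assume $\sum_{i=1}^j x_i^* > 0$. -/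
open Finset

theorem List.SortedGE.antitone_getD {α : Type*} [Preorder α] {l : List α} (hl : l.SortedGE)
    {d : α} (hd : ∀ a ∈ l, d ≤ a) : Antitone (l.getD · d) := by
  intro i j hij
  simp only [List.getD_eq_getElem?_getD]
  rcases lt_or_ge j l.length with hj | hj
  · rw [List.getElem?_eq_getElem hj, List.getElem?_eq_getElem (hij.trans_lt hj)]
    exact hl.getElem_ge_getElem_of_le hij
  · rw [List.getElem?_eq_none hj, Option.getD_none]
    rcases lt_or_ge i l.length with hi | hi
    · rw [List.getElem?_eq_getElem hi]; exact hd _ (List.getElem_mem hi)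
    · rw [List.getElem?_eq_none hi, Option.getD_none]

theorem List.sum_map_eq_sum_range_getD {α M : Type*} [AddCommMonoid M] (l : List α) (d : α)
    (f : α → M) : (l.map f).sum = ∑ i ∈ Finset.range l.length, f (l.getD i d) := by
  conv_lhs => rw [← List.ofFn_getElem (xs := l)]
  rw [List.map_ofFn, List.sum_ofFn, ← Fin.sum_univ_eq_sum_range]
  simp

section drear

variable {n : ℕ} (x : Fin n → ℝ)

theorem antitone_drear : Antitone (drear x) :=
  ((List.sortedGE_mergeSort).antitone_getD fun a ha => by
    obtain ⟨i, rfl⟩ := List.mem_ofFn.mp ((List.mergeSort_perm _ _).mem_iff.mp ha)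
    exact abs_nonneg _).comp_monotone fun _ _ h => Nat.sub_le_sub_right h 1

theorem drear_nonneg (k : ℕ) : 0 ≤ drear x k :=
  calc 0 = drear x (k + n + 1) := by
        refine (List.getD_eq_default _ _ ?_).symm
        simp
    _ ≤ drear x k := antitone_drear x (by omega)

theorem sum_comp_abs_eq_sum_range_drear (f : ℝ → ℝ) :
    ∑ k, f |x k| = ∑ i ∈ range n, f (drear x (i + 1)) := by
  have hperm := List.mergeSort_perm (List.ofFn fun i => |x i|) (· ≥ ·)
  rw [← List.sum_ofFn, show (List.ofFn fun k => f |x k|) = (List.ofFn fun i => |x i|).map f from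
    List.map_ofFn.symm, ← (hperm.map f).sum_eq,
    List.sum_map_eq_sum_range_getD _ 0, hperm.length_eq, List.length_ofFn]
  rfl

end drear

theorem Antitone.mul_le_sum_range {b : ℕ → ℝ} (hb : Antitone b) (j : ℕ) :
    j * b (j - 1) ≤ ∑ i ∈ range j, b i := by
  simpa using card_nsmul_le_sum (range j) b (b (j - 1)) fun i hi =>
    hb (Nat.le_sub_one_of_lt (mem_range.mp hi))

theorem Antitone.sum_range_max_sub_eq {b : ℕ → ℝ} (hb : Antitone b) {j n : ℕ} (hjn : j ≤ n) :
    ∑ i ∈ range n, max (b i - b (j - 1)) 0 = ∑ i ∈ range j, b i - j * b (j - 1) := by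
  rw [← sum_range_add_sum_Ico _ hjn, sum_eq_zero (s := Ico j n), add_zero]
  · rw [show (j : ℝ) * b (j - 1) = ∑ _i ∈ range j, b (j - 1) by simp, ← sum_sub_distrib]
    refine sum_congr rfl fun i hi => max_eq_left (sub_nonneg.mpr ?_)
    exact hb (Nat.le_sub_one_of_lt (mem_range.mp hi))
  · intro i hi
    exact max_eq_right (sub_nonpos.mpr (hb ((j.sub_le 1).trans (mem_Ico.mp hi).1)))

theorem max_div_sub_le_max_sub_div {S r c t : ℝ} (hS : 0 < S) (hc : c ≤ S * r) :
    max (t / S - r) 0 ≤ max (t - c) 0 / S := by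
  rw [← max_div_div_right hS.le, zero_div, sub_div]
  gcongr
  rwa [div_le_iff₀' hS]

/-- Upper-bound half of Lemma 4.1: normalizing by the sum of the `j` largest
entries makes the Orlicz sum `∑ M_j` at most 1. -/
theorem stmt10 (n j : ℕ) (hj1 : 1 ≤ j) (hjn : j ≤ n) (x : Fin n → ℝ)
    (hpos : 0 < ∑ i ∈ Finset.range j, drear x (i + 1)) :
    ∑ k, max (|x k| / (∑ i ∈ Finset.range j, drear x (i + 1)) - 1 / (j : ℝ)) 0 ≤ 1 := by
  set S := ∑ i ∈ range j, drear x (i + 1)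
  have hb : Antitone fun i => drear x (i + 1) :=
    (antitone_drear x).comp_monotone fun _ _ => Nat.succ_le_succ
  set c := drear x (j - 1 + 1)
  have hjc : j * c ≤ S := hb.mul_le_sum_range j
  have hcS : c ≤ S * (1 / j) := by
    rw [mul_one_div, le_div_iff₀ (Nat.cast_pos.mpr hj1)]
    linarith
  calc ∑ k, max (|x k| / S - 1 / (j : ℝ)) 0
      ≤ ∑ k, max (|x k| - c) 0 / S := sum_le_sum fun k _ => max_div_sub_le_max_sub_div hpos hcS
    _ = (S - j * c) / S := by
      rw [← sum_div, sum_comp_abs_eq_sum_range_drear x fun t => max (t - c) 0,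
        hb.sum_range_max_sub_eq hjn]
    _ ≤ 1 := by
      rw [div_le_one hpos]
      exact sub_le_self S (mul_nonneg j.cast_nonneg (drear_nonneg x _))
end

section
/- Let $a \in \R^{n\times N}$ be an extreme point of the unit ball of the Orlicz space on $\R^{nN}$ with Orlicz function $M_{\ell N}(t)=\max(t-1/(\ell N),0)$ having all entries positive. Then $a$ has exactly one entry equal to $1 + \frac{1}{\ell N}$ and all other entries equal to $\frac{1}{\ell N}$. -/
/-!
An extreme point `a` of a set admits no perturbation `a ± v ≠ a` inside the set, while the
modular `ρ(x) = ∑ max (|x p| - c) 0` leaves room for many: if `ρ(a) < 1` any coordinate can move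
by `1 - ρ(a)`; a coordinate with `|a p| < c` can move inside `[-c, c]`, where
`t ↦ max (|t| - c) 0` vanishes; and two coordinates above `c` can trade mass, since `ρ` is affine
where all coordinates are at least `c`. Hence `ρ(a) = 1`, every `|a p| ≥ c`, and at most one
coordinate exceeds `c`; for nonnegative `a` this forces one entry `1 + c` and all others `c`.
-/

open Finset

theorem eq_zero_of_mem_extremePoints_of_add_mem_of_sub_mem {E : Type*} [AddCommGroup E]
    [Module ℝ E] {s : Set E} {a v : E} (ha : a ∈ s.extremePoints ℝ) (hadd : a + v ∈ s)
    (hsub : a - v ∈ s) : v = 0 :=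
  add_eq_left.mp (ha.2 hadd hsub (mem_openSegment_add_sub a v))

theorem nonpos_of_mem_extremePoints_of_forall_add_single_mem {ι : Type*} [DecidableEq ι]
    {s : Set (ι → ℝ)} {a : ι → ℝ} (ha : a ∈ s.extremePoints ℝ) {p : ι} {ε : ℝ}
    (h : ∀ t, |t| ≤ ε → a + Pi.single p t ∈ s) : ε ≤ 0 := by
  by_contra! hε
  have hsub : a - Pi.single p ε ∈ s := by
    rw [sub_eq_add_neg, ← Pi.single_neg]
    exact h _ (by rw [abs_neg, abs_of_pos hε])
  have hv := eq_zero_of_mem_extremePoints_of_add_mem_of_sub_mem ha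
    (h ε (abs_of_pos hε).le) hsub
  exact hε.ne' (Pi.single_eq_zero_iff.mp hv)

namespace Orlicz

variable {ι : Type*} [Fintype ι] {c : ℝ} {a : ι → ℝ}

def modular (c : ℝ) (x : ι → ℝ) : ℝ := ∑ p, max (|x p| - c) 0

def ball (ι : Type*) [Fintype ι] (c : ℝ) : Set (ι → ℝ) := {x | modular c x ≤ 1}

theorem max_abs_add_sub_le (c s t : ℝ) : max (|s + t| - c) 0 ≤ max (|s| - c) 0 + |t| :=
  max_le (by linarith [abs_add_le s t, le_max_left (|s| - c) 0])
    (by linarith [abs_nonneg t, le_max_right (|s| - c) 0])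

theorem modular_add_le (c : ℝ) (x v : ι → ℝ) :
    modular c (x + v) ≤ modular c x + ∑ p, |v p| := by
  rw [modular, modular, ← sum_add_distrib]
  exact sum_le_sum fun p _ => max_abs_add_sub_le c (x p) (v p)

theorem sum_abs_pi_single [DecidableEq ι] (p : ι) (t : ℝ) : ∑ q, |Pi.single p t q| = |t| := by
  simp [Pi.single_apply, apply_ite]

theorem modular_eq_sum_sub (hc : 0 ≤ c) {x : ι → ℝ} (hx : ∀ p, c ≤ x p) :
    modular c x = ∑ p, (x p - c) :=
  sum_congr rfl fun p _ => by
    rw [abs_of_nonneg (hc.trans (hx p)), max_eq_left (sub_nonneg.mpr (hx p))]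

theorem modular_eq_one_of_mem_extremePoints [Nonempty ι]
    (ha : a ∈ (ball ι c).extremePoints ℝ) : modular c a = 1 := by
  classical
  obtain ⟨p⟩ := ‹Nonempty ι›
  refine le_antisymm ha.1 (sub_nonpos.mp ?_)
  refine nonpos_of_mem_extremePoints_of_forall_add_single_mem (p := p) ha fun t ht => ?_
  have := modular_add_le c a (Pi.single p t)
  rw [sum_abs_pi_single] at this
  exact this.trans (by linarith)

theorem le_abs_of_mem_extremePoints (ha : a ∈ (ball ι c).extremePoints ℝ) (p : ι) :
    c ≤ |a p| := by
  classical
  refine sub_nonpos.mp <|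
    nonpos_of_mem_extremePoints_of_forall_add_single_mem (p := p) ha fun t ht => ?_
  refine (sum_le_sum fun q _ => ?_).trans (show modular c a ≤ 1 from ha.1)
  rcases eq_or_ne q p with rfl | hq
  · rw [Pi.add_apply, Pi.single_eq_same, max_eq_right (by linarith [abs_add_le (a q) t])]
    exact le_max_right _ _
  · rw [Pi.add_apply, Pi.single_eq_of_ne hq, add_zero]

theorem add_mem_ball_of_sum_eq_zero (hc : 0 ≤ c) (ha : a ∈ ball ι c) (hge : ∀ r, c ≤ a r)
    {w : ι → ℝ} (hw : ∀ r, |w r| ≤ a r - c) (hw0 : ∑ r, w r = 0) : a + w ∈ ball ι c := by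
  have hx : ∀ r, c ≤ (a + w) r := fun r => by
    linarith [neg_abs_le (w r), hw r, Pi.add_apply a w r]
  have hρ : modular c a ≤ 1 := ha
  rw [modular_eq_sum_sub hc hge] at hρ
  show modular c (a + w) ≤ 1
  rw [modular_eq_sum_sub hc hx]
  simpa only [Pi.add_apply, add_sub_right_comm, sum_add_distrib, hw0, add_zero] using hρ

theorem eq_of_lt_of_lt_of_mem_extremePoints (hc : 0 ≤ c) (ha : a ∈ (ball ι c).extremePoints ℝ)
    (hge : ∀ r, c ≤ a r) {p q : ι} (hp : c < a p) (hq : c < a q) : p = q := by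
  classical
  by_contra hpq
  set ε := min (a p - c) (a q - c)
  set v : ι → ℝ := Pi.single p ε - Pi.single q ε
  have hε : 0 ≤ ε := le_min (sub_nonneg.mpr hp.le) (sub_nonneg.mpr hq.le)
  have hv : ∀ r, |v r| ≤ a r - c := by
    intro r
    simp only [v, Pi.sub_apply, Pi.single_apply]
    split_ifs with h₁ h₂ h₂
    · exact absurd (h₁.symm.trans h₂) hpq
    · subst h₁; rw [sub_zero, abs_of_nonneg hε]; exact min_le_left _ _
    · subst h₂; rw [zero_sub, abs_neg, abs_of_nonneg hε]; exact min_le_right _ _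
    · rw [sub_zero, abs_zero]; linarith [hge r]
  have hv0 : ∑ r, v r = 0 := by simp [v]
  have hadd : a + v ∈ ball ι c := add_mem_ball_of_sum_eq_zero hc ha.1 hge hv hv0
  have hsub : a - v ∈ ball ι c := by
    rw [sub_eq_add_neg]
    exact add_mem_ball_of_sum_eq_zero hc ha.1 hge (by simpa using hv) (by simp [hv0])
  have := congrFun (eq_zero_of_mem_extremePoints_of_add_mem_of_sub_mem ha hadd hsub) p
  simp only [v, Pi.sub_apply, Pi.single_eq_same, Pi.single_eq_of_ne hpq, sub_zero,
    Pi.zero_apply] at this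
  exact (lt_min (sub_pos.2 hp) (sub_pos.2 hq)).ne' this

theorem exists_eq_one_add_of_mem_extremePoints [Nonempty ι] (hc : 0 ≤ c)
    (hnonneg : ∀ p, 0 ≤ a p) (ha : a ∈ (ball ι c).extremePoints ℝ) :
    ∃ p₀, a p₀ = 1 + c ∧ ∀ p, p ≠ p₀ → a p = c := by
  classical
  have hge : ∀ p, c ≤ a p := fun p => by
    simpa [abs_of_nonneg (hnonneg p)] using le_abs_of_mem_extremePoints ha p
  have hρ := modular_eq_one_of_mem_extremePoints ha
  rw [modular_eq_sum_sub hc hge] at hρ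
  obtain ⟨p₀, -, hp₀⟩ : ∃ p₀ ∈ univ, (0 : ℝ) < a p₀ - c :=
    exists_lt_of_sum_lt (by simp [hρ])
  have hothers : ∀ p, p ≠ p₀ → a p = c := fun p hp =>
    ((hge p).eq_or_lt.resolve_right fun h =>
      hp (eq_of_lt_of_lt_of_mem_extremePoints hc ha hge h (sub_pos.mp hp₀))).symm
  refine ⟨p₀, ?_, hothers⟩
  rw [← add_sum_erase _ _ (mem_univ p₀),
    sum_eq_zero fun p hp => by rw [hothers p (ne_of_mem_erase hp), sub_self]] at hρ
  linarith

end Orlicz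

theorem stmt11_general (n N ℓ : ℕ) (hn : 1 ≤ n) (hN : 1 ≤ N)
    (a : Fin n × Fin N → ℝ)
    (hpos : ∀ p, 0 < a p)
    (hext : a ∈ Set.extremePoints ℝ
      {x : Fin n × Fin N → ℝ | ∑ p, max (|x p| - 1 / ((ℓ : ℝ) * N)) 0 ≤ 1}) :
    ∃ p₀ : Fin n × Fin N, a p₀ = 1 + 1 / ((ℓ : ℝ) * N) ∧
      ∀ p, p ≠ p₀ → a p = 1 / ((ℓ : ℝ) * N) := by
  have : Nonempty (Fin n × Fin N) := ⟨(⟨0, hn⟩, ⟨0, hN⟩)⟩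
  exact Orlicz.exists_eq_one_add_of_mem_extremePoints (by positivity) (fun p => (hpos p).le) hext

/-- Characterization of positive extreme points of the unit ball of the Orlicz
space with Orlicz function `M_{ℓN}(t) = max(t - 1/(ℓN), 0)`: exactly one entry
equals `1 + 1/(ℓN)` and all others equal `1/(ℓN)`. -/
theorem stmt11 (n N ℓ : ℕ) (hn : 1 ≤ n) (hN : 1 ≤ N) (hℓ1 : 1 ≤ ℓ) (hℓ : ℓ ≤ n)
    (a : Fin n × Fin N → ℝ)
    (hpos : ∀ p, 0 < a p)
    (hext : a ∈ Set.extremePoints ℝ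
      {x : Fin n × Fin N → ℝ | ∑ p, max (|x p| - 1 / ((ℓ : ℝ) * N)) 0 ≤ 1}) :
    ∃ p₀ : Fin n × Fin N, a p₀ = 1 + 1 / ((ℓ : ℝ) * N) ∧
      ∀ p, p ≠ p₀ → a p = 1 / ((ℓ : ℝ) * N) :=
  stmt11_general n N ℓ hn hN a hpos hext
end

section
/- Let $G$ be a finite collection of maps $g:\{1,\dots,n\}\to\{1,\dots,N\}$ with uniform probability, satisfying $\Pro(g(i)=j)=1/N$ for all $i,j$. Let $\ell \le n$, fix $(i_0,j_0)$, and let $a \in \R^{n\times N}$ be defined by $a_{ij}=1/(\ell N)$ for $(i,j)\ne(i_0,j_0)$ and $a_{i_0 j_0}=1+1/(\ell N)$. Then $\E \sum_{k=1}^{\ell} \kmax_{1\le i\le n} a_{ig(i)} = \frac{2}{N} = \frac{1}{N}\sum_{j=1}^{\ell N} s(j)$. -/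
open Finset

theorem List.mergeSort_ge_eq_of_perm {α : Type*} [LinearOrder α] {l t : List α} (hp : l.Perm t)
    (ht : t.Pairwise (· ≥ ·)) : l.mergeSort (fun a b => decide (b ≤ a)) = t :=
  ((List.mergeSort_perm l _).trans hp).eq_of_pairwise' (List.pairwise_mergeSort' (· ≥ ·) l) ht

theorem Multiset.map_univ_eq_cons_replicate {ι β : Type*} [Fintype ι] {x : ι → β} {i₀ : ι} {c : β}
    (hx : ∀ i ≠ i₀, x i = c) :
    (univ : Finset ι).val.map x = x i₀ ::ₘ Multiset.replicate (Fintype.card ι - 1) c := by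
  classical
  have hi₀ : i₀ ∈ (univ : Finset ι).val := mem_univ_val i₀
  rw [← Multiset.cons_erase hi₀, Multiset.map_cons]
  congr 1
  refine Multiset.eq_replicate.mpr ⟨by simp [Multiset.card_erase_of_mem hi₀], fun b hb => ?_⟩
  obtain ⟨i, hi, rfl⟩ := Multiset.mem_map.mp hb
  exact hx i (univ.nodup.mem_erase_iff.mp hi).1

theorem sum_range_succ_getD_cons_replicate {M : Type*} [AddCommMonoid M] (d c : M)
    {m L : ℕ} (hL : L ≤ m) :
    ∑ k ∈ range (L + 1), (d :: List.replicate m c).getD k 0 = d + L • c := by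
  rw [sum_range_succ', add_comm, List.getD_cons_zero]
  congr 1
  rw [← card_range L, ← sum_const, card_range]
  refine sum_congr rfl fun k hk => ?_
  rw [List.getD_cons_succ, List.getD_eq_getElem _ _ (by simp at hk ⊢; omega), List.getElem_replicate]

theorem sum_range_getD_mergeSort_of_eq_off {ι : Type*} [Fintype ι] {x : ι → ℝ} {i₀ : ι} {c : ℝ}
    (hx : ∀ i ≠ i₀, x i = c) (hc : c ≤ x i₀) {l : List ℝ}
    (hl : (l : Multiset ℝ) = (univ : Finset ι).val.map x) {L : ℕ} (hL₁ : 1 ≤ L)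
    (hL : L ≤ Fintype.card ι) :
    ∑ k ∈ range L, (l.mergeSort (fun a b => decide (b ≤ a))).getD k 0 = x i₀ - c + L * c := by
  have hsort : l.mergeSort (fun a b => decide (b ≤ a))
      = x i₀ :: List.replicate (Fintype.card ι - 1) c := by
    refine List.mergeSort_ge_eq_of_perm (Multiset.coe_eq_coe.mp ?_) ?_
    · rw [hl, Multiset.map_univ_eq_cons_replicate hx, ← Multiset.coe_replicate, Multiset.cons_coe]
    · exact List.pairwise_cons.mpr ⟨fun b hb => (List.eq_of_mem_replicate hb).trans_le hc,
        List.pairwise_replicate.mpr (Or.inr le_rfl)⟩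
  obtain ⟨L, rfl⟩ := Nat.exists_eq_add_of_le' hL₁
  rw [hsort, sum_range_succ_getD_cons_replicate _ _ (by omega)]
  push_cast
  ring

theorem sum_range_kmax_of_eq_off {n : ℕ} {x : Fin n → ℝ} {i₀ : Fin n} {c : ℝ}
    (hx : ∀ i ≠ i₀, x i = c) (hc : c ≤ x i₀) {L : ℕ} (hL₁ : 1 ≤ L) (hL : L ≤ n) :
    ∑ k ∈ range L, kmax x (k + 1) = x i₀ - c + L * c := by
  simp only [kmax, Nat.add_sub_cancel]
  exact sum_range_getD_mergeSort_of_eq_off hx hc (by rw [List.ofFn_eq_map]; rfl) hL₁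
    (by rwa [Fintype.card_fin])

theorem sum_range_smat_of_eq_off {n N : ℕ} {a : Fin n → Fin N → ℝ} {i₀ : Fin n} {j₀ : Fin N}
    {c : ℝ} (ha : ∀ p ≠ (i₀, j₀), |a p.1 p.2| = c) (hc : c ≤ |a i₀ j₀|) {L : ℕ} (hL₁ : 1 ≤ L)
    (hL : L ≤ n * N) :
    ∑ k ∈ range L, smat a (k + 1) = |a i₀ j₀| - c + L * c := by
  simp only [smat, Nat.add_sub_cancel]
  exact sum_range_getD_mergeSort_of_eq_off (x := fun p : Fin n × Fin N => |a p.1 p.2|) ha hc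
    (by rw [← Multiset.map_coe, coe_toList]) hL₁ (by simpa using hL)

theorem stmt12_general (n N ℓ : ℕ) (hN : 1 ≤ N) (hℓ1 : 1 ≤ ℓ) (hℓ : ℓ ≤ n)
    (G : Finset (Fin n → Fin N)) (hG : G.Nonempty)
    (h1 : ∀ i : Fin n, ∀ j : Fin N,
      ((G.filter fun g => g i = j).card : ℝ) / G.card = 1 / N)
    (i₀ : Fin n) (j₀ : Fin N)
    (a : Fin n → Fin N → ℝ)
    (ha : ∀ i j, a i j = if (i, j) = (i₀, j₀) then 1 + 1 / ((ℓ : ℝ) * N)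
      else 1 / ((ℓ : ℝ) * N)) :
    (∑ g ∈ G, ∑ k ∈ Finset.range ℓ, kmax (fun i => a i (g i)) (k + 1)) / G.card
      = 2 / N ∧
    (2 : ℝ) / N = (1 / N) * ∑ j ∈ Finset.range (ℓ * N), smat a (j + 1) := by
  set c : ℝ := 1 / ((ℓ : ℝ) * N) with hc_def
  have hc : 0 < c := by positivity
  have hsum_kmax (g : Fin n → Fin N) : ∑ k ∈ range ℓ, kmax (fun i => a i (g i)) (k + 1)
      = (if g i₀ = j₀ then 1 else 0) + ℓ * c := by
    have hoff : ∀ i ≠ i₀, a i (g i) = c := fun i hi => by simp [ha, hi]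
    have hi₀ : a i₀ (g i₀) = (if g i₀ = j₀ then 1 else 0) + c := by
      by_cases h : g i₀ = j₀ <;> simp [ha, h]
    rw [sum_range_kmax_of_eq_off hoff (by rw [hi₀]; split_ifs <;> linarith) hℓ1 hℓ, hi₀]
    ring
  have hoff : ∀ p ≠ (i₀, j₀), |a p.1 p.2| = c := fun p hp => by
    rw [ha, Prod.mk.eta, if_neg hp, abs_of_pos hc]
  have hi₀ : |a i₀ j₀| = 1 + c := by
    rw [ha, if_pos rfl, abs_of_pos (by positivity)]
  constructor
  · rw [sum_congr rfl fun g _ => hsum_kmax g, sum_add_distrib, sum_boole, sum_const, nsmul_eq_mul,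
      add_div, h1, mul_div_cancel_left₀ _ (by positivity), hc_def]
    field_simp
    ring
  · rw [sum_range_smat_of_eq_off hoff (by linarith) (Nat.one_le_iff_ne_zero.mpr (by positivity))
      (Nat.mul_le_mul_right N hℓ), hi₀, hc_def]
    push_cast
    field_simp
    ring

/-- Key computation in Proposition 4.2: for the extreme point matrix `a` with
`a_{i₀j₀} = 1 + 1/(ℓN)` and all other entries `1/(ℓN)`,
`E ∑_{k=1}^ℓ kmax a_{i g(i)} = 2/N = N⁻¹ ∑_{j=1}^{ℓN} s(j)`. -/
theorem stmt12 (n N ℓ : ℕ) (hn : 1 ≤ n) (hN : 1 ≤ N) (hℓ1 : 1 ≤ ℓ) (hℓ : ℓ ≤ n)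
    (G : Finset (Fin n → Fin N)) (hG : G.Nonempty)
    (h1 : ∀ i : Fin n, ∀ j : Fin N,
      ((G.filter fun g => g i = j).card : ℝ) / G.card = 1 / N)
    (i₀ : Fin n) (j₀ : Fin N)
    (a : Fin n → Fin N → ℝ)
    (ha : ∀ i j, a i j = if (i, j) = (i₀, j₀) then 1 + 1 / ((ℓ : ℝ) * N)
      else 1 / ((ℓ : ℝ) * N)) :
    (∑ g ∈ G, ∑ k ∈ Finset.range ℓ, kmax (fun i => a i (g i)) (k + 1)) / G.card
      = 2 / N ∧
    (2 : ℝ) / N = (1 / N) * ∑ j ∈ Finset.range (ℓ * N), smat a (j + 1) :=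
  stmt12_general n N ℓ hN hℓ1 hℓ G hG h1 i₀ j₀ a ha
end

section
/- Let $a \in \R^{n\times N}$, $1 \le p < \infty$, and let $G$ be a finite collection of maps $g:\{1,\dots,n\}\to\{1,\dots,N\}$ with uniform probability satisfying $\Pro(g(i)=j)=1/N$ for all $i,j$. Then $\E\Big(\sum_{i=1}^n |a_{ig(i)}|^p\Big)^{1/p} \le \frac{1}{N}\sum_{k=1}^N s(k) + \Big(\frac{1}{N}\sum_{k=N+1}^{nN} s(k)^p\Big)^{1/p}$, where $(s(k))_{k=1}^{nN}$ is the decreasing rearrangement of $(|a_{ij}|)$. -/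
open Finset

namespace Real

variable {ι : Type*} {s : Finset ι} {p : ℝ}

theorem sum_rpow_le_rpow_sum_of_nonneg {f : ι → ℝ} (hp : 1 ≤ p) (hf : ∀ i ∈ s, 0 ≤ f i) :
    ∑ i ∈ s, f i ^ p ≤ (∑ i ∈ s, f i) ^ p := by
  induction s using Finset.cons_induction with
  | empty => simp [zero_rpow (by linarith : p ≠ 0)]
  | cons a s ha ih =>
    rw [forall_mem_cons] at hf
    rw [sum_cons, sum_cons]
    calc f a ^ p + ∑ i ∈ s, f i ^ p ≤ f a ^ p + (∑ i ∈ s, f i) ^ p := by gcongr; exact ih hf.2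
      _ ≤ (f a + ∑ i ∈ s, f i) ^ p := add_rpow_le_rpow_add hf.1 (sum_nonneg hf.2) hp

theorem Lp_le_sum_of_nonneg {f : ι → ℝ} (hp : 1 ≤ p) (hf : ∀ i ∈ s, 0 ≤ f i) :
    (∑ i ∈ s, f i ^ p) ^ (1 / p) ≤ ∑ i ∈ s, f i :=
  calc (∑ i ∈ s, f i ^ p) ^ (1 / p) ≤ ((∑ i ∈ s, f i) ^ p) ^ (1 / p) := by
        gcongr
        · exact sum_nonneg fun i hi => rpow_nonneg (hf i hi) p
        · exact sum_rpow_le_rpow_sum_of_nonneg hp hf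
    _ = ∑ i ∈ s, f i := by
        rw [one_div, rpow_rpow_inv (sum_nonneg hf) (by linarith)]

theorem Lp_add_le_sum_add_Lp_of_nonneg {f g : ι → ℝ} (hp : 1 ≤ p) (hf : ∀ i ∈ s, 0 ≤ f i)
    (hg : ∀ i ∈ s, 0 ≤ g i) :
    (∑ i ∈ s, (f i + g i) ^ p) ^ (1 / p) ≤ ∑ i ∈ s, f i + (∑ i ∈ s, g i ^ p) ^ (1 / p) :=
  (Lp_add_le_of_nonneg s hp hf hg).trans (add_le_add_left (Lp_le_sum_of_nonneg hp hf) _)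

theorem sum_div_card_le_rpow_sum_rpow_div_card (hs : s.Nonempty) {z : ι → ℝ}
    (hz : ∀ i ∈ s, 0 ≤ z i) (hp : 1 ≤ p) :
    (∑ i ∈ s, z i) / #s ≤ ((∑ i ∈ s, z i ^ p) / #s) ^ (1 / p) := by
  have hw : ∑ _i ∈ s, (1 / #s : ℝ) = 1 := by
    rw [sum_const, nsmul_eq_mul, mul_one_div_cancel (by exact_mod_cast hs.card_ne_zero)]
  simpa only [one_div_mul_eq_div, ← sum_div] using
    arith_mean_le_rpow_mean s (fun _ => 1 / #s) z (fun _ _ => by positivity) hw hz hp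

end Real

section UniformMaps

variable {ι κ : Type*} [Fintype ι] [Fintype κ] [DecidableEq κ] {G : Finset (ι → κ)} {c : ℝ}

theorem sum_sum_comp_div_card_eq_mul_sum
    (hG : ∀ i j, (#(G.filter fun g => g i = j) : ℝ) / #G = c) (F : ι × κ → ℝ) :
    (∑ g ∈ G, ∑ i, F (i, g i)) / #G = c * ∑ q, F q := by
  have hfiber : ∀ i, ∑ g ∈ G, F (i, g i) = ∑ j, #(G.filter fun g => g i = j) * F (i, j) := by
    intro i
    rw [← sum_fiberwise G (· i)]
    refine sum_congr rfl fun j _ => ?_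
    rw [sum_congr rfl fun g hg => by rw [(mem_filter.1 hg).2], sum_const, nsmul_eq_mul]
  rw [sum_comm, sum_div]
  simp_rw [hfiber, sum_div, mul_div_right_comm, hG, ← mul_sum, Fintype.sum_prod_type]

theorem sum_Lp_add_div_card_le (hGne : G.Nonempty)
    (hG : ∀ i j, (#(G.filter fun g => g i = j) : ℝ) / #G = c) {u v : ι × κ → ℝ}
    (hu : ∀ q, 0 ≤ u q) (hv : ∀ q, 0 ≤ v q) {p : ℝ} (hp : 1 ≤ p) :
    (∑ g ∈ G, (∑ i, (u (i, g i) + v (i, g i)) ^ p) ^ (1 / p)) / #G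
      ≤ c * ∑ q, u q + (c * ∑ q, v q ^ p) ^ (1 / p) := by
  have hLp_nonneg : ∀ g ∈ G, 0 ≤ (∑ i, v (i, g i) ^ p) ^ (1 / p) := fun g _ =>
    Real.rpow_nonneg (sum_nonneg fun i _ => Real.rpow_nonneg (hv _) p) _
  calc (∑ g ∈ G, (∑ i, (u (i, g i) + v (i, g i)) ^ p) ^ (1 / p)) / #G
      ≤ (∑ g ∈ G, (∑ i, u (i, g i) + (∑ i, v (i, g i) ^ p) ^ (1 / p))) / #G := by
        gcongr with g
        exact Real.Lp_add_le_sum_add_Lp_of_nonneg hp (fun i _ => hu _) (fun i _ => hv _)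
    _ = (∑ g ∈ G, ∑ i, u (i, g i)) / #G + (∑ g ∈ G, (∑ i, v (i, g i) ^ p) ^ (1 / p)) / #G := by
        rw [sum_add_distrib, add_div]
    _ ≤ (∑ g ∈ G, ∑ i, u (i, g i)) / #G
          + ((∑ g ∈ G, ((∑ i, v (i, g i) ^ p) ^ (1 / p)) ^ p) / #G) ^ (1 / p) := by
        gcongr
        exact Real.sum_div_card_le_rpow_sum_rpow_div_card hGne hLp_nonneg hp
    _ = c * ∑ q, u q + (c * ∑ q, v q ^ p) ^ (1 / p) := by
        have hp0 : p ≠ 0 := by linarith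
        simp_rw [one_div, Real.rpow_inv_rpow (sum_nonneg fun i _ => Real.rpow_nonneg (hv _) p) hp0]
        rw [sum_sum_comp_div_card_eq_mul_sum hG, sum_sum_comp_div_card_eq_mul_sum hG (v · ^ p)]

end UniformMaps

namespace List

variable {α : Type*}

theorem sum_range_map_getD {M : Type*} [AddCommMonoid M] (l : List α) {d : α} {h : α → M}
    (hd : h d = 0) (a m : ℕ) :
    ∑ k ∈ Finset.range m, h (l.getD (a + k) d) = (((l.drop a).take m).map h).sum := by
  induction m with
  | zero => simp
  | succ m ih =>
    rw [Finset.sum_range_succ, ih, take_add_one, map_append, sum_append, getD_eq_getElem?_getD,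
      ← getElem?_drop]
    cases (l.drop a)[m]? <;> simp [hd]

theorem Nodup.toFinset_drop_eq_compl [Fintype α] [DecidableEq α] {l : List α} (hl : l.Nodup)
    (hmem : ∀ x, x ∈ l) (m : ℕ) : (l.drop m).toFinset = (l.take m).toFinsetᶜ := by
  ext x
  have hx : x ∈ l.take m ++ l.drop m := (take_append_drop m l).symm ▸ hmem x
  simp only [Finset.mem_compl, mem_toFinset]
  exact ⟨fun hd ht => disjoint_take_drop hl le_rfl ht hd,
    fun ht => (mem_append.1 hx).resolve_left ht⟩

end List

section SortedEntries

variable {n N : ℕ} (a : Fin n → Fin N → ℝ)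

/-- Sorting the index pairs instead of the values remembers where each `smat a k` sits. -/
noncomputable def sortedIndices : List (Fin n × Fin N) :=
  (univ : Finset (Fin n × Fin N)).toList.mergeSort
    (fun q r => decide (|a r.1 r.2| ≤ |a q.1 q.2|))

theorem smat_eq_getD (k : ℕ) :
    smat a k = ((sortedIndices a).map fun q => |a q.1 q.2|).getD (k - 1) 0 := by
  rw [smat, sortedIndices, List.map_mergeSort (s := fun x y => decide (y ≤ x)) fun _ _ _ _ => rfl]

theorem exists_finset_sum_eq_sum_smat (m : ℕ) {h : ℝ → ℝ} (h0 : h 0 = 0) :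
    ∃ T : Finset (Fin n × Fin N), ∑ q ∈ T, |a q.1 q.2| = ∑ k ∈ range m, smat a (k + 1)
      ∧ ∑ q ∈ Tᶜ, h |a q.1 q.2| = ∑ k ∈ Icc (m + 1) (n * N), h (smat a k) := by
  have hperm : (sortedIndices a).Perm (univ : Finset (Fin n × Fin N)).toList :=
    List.mergeSort_perm _ _
  rw [← Ico_add_one_right_eq_Icc, sum_Ico_eq_sum_range]
  simp_rw [smat_eq_getD, add_tsub_cancel_right, add_right_comm m 1, add_tsub_cancel_right]
  generalize sortedIndices a = M at hperm ⊢
  have hnd : M.Nodup := hperm.nodup_iff.2 (nodup_toList _)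
  have hmem : ∀ q, q ∈ M := fun q => hperm.mem_iff.2 (mem_toList.2 (mem_univ q))
  have hlen : M.length = n * N := by simp [hperm.length_eq]
  refine ⟨(M.take m).toFinset, ?_, ?_⟩
  · rw [List.sum_toFinset _ (hnd.sublist (List.take_sublist _ _))]
    simpa [List.map_take] using
      ((M.map fun q => |a q.1 q.2|).sum_range_map_getD (h := id) rfl 0 m).symm
  · rw [← hnd.toFinset_drop_eq_compl hmem,
      List.sum_toFinset _ (hnd.sublist (List.drop_sublist _ _)), List.sum_range_map_getD _ h0,
      List.take_of_length_le (by simp [hlen]), List.map_drop, List.map_drop, List.map_map]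
    rfl

end SortedEntries

/-- Upper bound of Theorem 1.2:
`E (∑ᵢ |a_{i g(i)}|^p)^{1/p} ≤ N⁻¹ ∑_{k=1}^N s(k) + (N⁻¹ ∑_{k=N+1}^{nN} s(k)^p)^{1/p}`. -/
theorem stmt16 (n N : ℕ) (a : Fin n → Fin N → ℝ) (p : ℝ) (hp : 1 ≤ p)
    (G : Finset (Fin n → Fin N)) (hG : G.Nonempty)
    (h1 : ∀ i : Fin n, ∀ j : Fin N,
      ((G.filter fun g => g i = j).card : ℝ) / G.card = 1 / N) :
    (∑ g ∈ G, (∑ i, |a i (g i)| ^ p) ^ (1 / p)) / G.card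
      ≤ (1 / N) * ∑ k ∈ Finset.range N, smat a (k + 1)
        + ((1 / N) * ∑ k ∈ Finset.Icc (N + 1) (n * N), smat a k ^ p) ^ (1 / p) := by
  have hp0 : (0 : ℝ) ^ p = 0 := Real.zero_rpow (by linarith)
  obtain ⟨T, hT, hTc⟩ := exists_finset_sum_eq_sum_smat a N (h := (· ^ p)) hp0
  set f : Fin n × Fin N → ℝ := fun q => |a q.1 q.2|
  have hf : ∀ q, 0 ≤ f q := fun q => abs_nonneg _
  have hsplit : ∀ q, (T : Set _).indicator f q + (↑Tᶜ : Set _).indicator f q = f q := by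
    intro q
    rw [coe_compl, Set.indicator_self_add_compl_apply]
  have hbound := sum_Lp_add_div_card_le hG h1 (Set.indicator_nonneg (s := T) fun q _ => hf q)
    (Set.indicator_nonneg (s := ↑Tᶜ) fun q _ => hf q) hp
  have hpow : ∀ q, (↑Tᶜ : Set _).indicator f q ^ p = (↑Tᶜ : Set _).indicator (f · ^ p) q :=
    fun q => (congrFun (Set.indicator_comp_of_zero (g := (· ^ p)) hp0) q).symm
  simp_rw [hsplit, hpow, sum_indicator_subset _ (subset_univ _)] at hbound
  rwa [hT, hTc] at hbound
end
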